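/- arXiv:2208.12188 — 10 statements merged into one kernel-verified Lean document; each statement's English description precedes it below -/
import Mathlib

section
/- Let V and H be real Hilbert spaces and let j : V → H be a continuous linear map that is injective, has dense range, and is a compact operator. Let a : V × V → ℝ be a continuous symmetric bilinear form, and suppose there exist ω ∈ ℝ and c > 0 such that a(u,u) + ω‖j(u)‖² ≥ c‖u‖² for all u ∈ V. Then there exists a continuous linear operator B : H → V such that: (i) for every y ∈ H and every u ∈ V, a(B y, u) + ω⟨j(B y), j(u)⟩ = ⟨y, j(u)⟩; (ii) B y is the unique element of V with this property, i.e. if x ∈ V satisfies a(x,u) + ω⟨j(x), j(u)⟩ = ⟨y, j(u)⟩ for all u ∈ V, then x = B y; (iii) B is injective; and (iv) the composition j ∘ B : H → H is a compact operator. -/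
open scoped RealInnerProductSpace

/-- The real inner product of `H` as a genuinely bilinear continuous map. -/
noncomputable def realInnerCLM (H : Type*) [NormedAddCommGroup H] [InnerProductSpace ℝ H] :
    H →L[ℝ] H →L[ℝ] ℝ := innerSL ℝ

theorem realInnerCLM_apply {H : Type*} [NormedAddCommGroup H] [InnerProductSpace ℝ H]
    (x z : H) : realInnerCLM H x z = ⟪x, z⟫ := rfl

set_option maxHeartbeats 2000000 in
/-- **Lax–Milgram-type lemma with compact resolvent.**
Let `V` and `H` be real Hilbert spaces and `j : V → H` a continuous linear map which is
injective, has dense range and is a compact operator. Let `a` be a continuous symmetric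
bilinear form on `V` which is `H`-elliptic: `a(u,u) + ω‖j u‖² ≥ c‖u‖²` for some `ω ∈ ℝ`,
`c > 0`. Then there is a bounded operator `B : H → V` (the inverse of `A + ω·id`, where `A`
is the operator associated with `a`) such that `B y` is the unique solution of
`a(B y, u) + ω⟨j (B y), j u⟩ = ⟨y, j u⟩` for all `u`, `B` is injective, and `j ∘ B` is a
compact operator on `H`. -/
theorem compact_resolvent_of_elliptic_form
    {V H : Type*} [NormedAddCommGroup V] [InnerProductSpace ℝ V] [CompleteSpace V]
    [NormedAddCommGroup H] [InnerProductSpace ℝ H] [CompleteSpace H]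
    (j : V →L[ℝ] H) (hj_inj : Function.Injective j) (hj_dense : DenseRange j)
    (hj_compact : IsCompactOperator (⇑j))
    (a : V →L[ℝ] V →L[ℝ] ℝ) (ha_symm : ∀ u v : V, a u v = a v u)
    (ω c : ℝ) (hc : 0 < c)
    (h_elliptic : ∀ u : V, c * ‖u‖ ^ 2 ≤ a u u + ω * ‖j u‖ ^ 2) :
    ∃ B : H →L[ℝ] V,
      (∀ y : H, ∀ u : V, a (B y) u + ω * ⟪j (B y), j u⟫ = ⟪y, j u⟫) ∧
      (∀ y : H, ∀ x : V, (∀ u : V, a x u + ω * ⟪j x, j u⟫ = ⟪y, j u⟫) → x = B y) ∧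
      Function.Injective B ∧
      IsCompactOperator (fun y : H => j (B y)) := by
  set b : V →L[ℝ] V →L[ℝ] ℝ := a + ω • ((realInnerCLM H).bilinearComp j j) with hb
  have hb_apply : ∀ u v : V, b u v = a u v + ω * ⟪j u, j v⟫ := by
    intro u v
    simp only [hb, ContinuousLinearMap.add_apply, ContinuousLinearMap.smul_apply,
      ContinuousLinearMap.bilinearComp_apply, smul_eq_mul, realInnerCLM_apply]
  have hcoer : IsCoercive b := by
    refine ⟨c, hc, fun u => ?_⟩
    have h1 := h_elliptic u
    have hn : ‖j u‖ ^ 2 = ⟪j u, j u⟫ := by rw [real_inner_self_eq_norm_sq]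
    rw [hb_apply, ← hn]
    nlinarith [h1]
  set E := hcoer.continuousLinearEquivOfBilin with hE
  set B : H →L[ℝ] V := (E.symm : V →L[ℝ] V).comp (ContinuousLinearMap.adjoint j) with hBdef
  have hBy : ∀ y : H, B y = E.symm (ContinuousLinearMap.adjoint j y) := fun y => rfl
  have key : ∀ y : H, ∀ u : V, b (B y) u = ⟪y, j u⟫ := by
    intro y u
    have h1 : ⟪E (B y), u⟫ = b (B y) u := hcoer.continuousLinearEquivOfBilin_apply (B y) u
    have h2 : E (B y) = ContinuousLinearMap.adjoint j y := by
      rw [hBy]; exact E.apply_symm_apply _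
    rw [← h1, h2, ContinuousLinearMap.adjoint_inner_left]
  have uniq : ∀ y : H, ∀ x : V, (∀ u : V, b x u = ⟪y, j u⟫) → x = B y := by
    intro y x hx
    have hdiff : ∀ u : V, b (x - B y) u = 0 := by
      intro u
      simp only [map_sub, ContinuousLinearMap.sub_apply, hx u, key y u, sub_self]
    obtain ⟨C, hC, hcoer2⟩ := id hcoer
    have h3 := hcoer2 (x - B y)
    rw [hdiff (x - B y)] at h3
    have hnorm : ‖x - B y‖ = 0 := by
      by_contra hne
      have hpos : 0 < ‖x - B y‖ := lt_of_le_of_ne (norm_nonneg _) (Ne.symm hne)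
      nlinarith [mul_pos (mul_pos hC hpos) hpos]
    have h4 : x - B y = 0 := by rwa [norm_eq_zero] at hnorm
    exact sub_eq_zero.mp h4
  refine ⟨B, ?_, ?_, ?_, ?_⟩
  · intro y u
    have := key y u
    rwa [hb_apply] at this
  · intro y x hx
    refine uniq y x fun u => ?_
    rw [hb_apply]; exact hx u
  · intro y₁ y₂ hB12
    have horth : ∀ u : V, ⟪y₁ - y₂, j u⟫ = 0 := by
      intro u
      have h1 := key y₁ u
      have h2 := key y₂ u
      rw [hB12] at h1
      rw [inner_sub_left, ← h1, ← h2, sub_self]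
    have hcont1 : Continuous fun z : H => (⟪y₁ - y₂, z⟫ : ℝ) :=
      continuous_const.inner continuous_id
    have hfun : (fun z : H => (⟪y₁ - y₂, z⟫ : ℝ)) = fun _ => (0 : ℝ) := by
      refine Continuous.ext_on hj_dense hcont1 continuous_const ?_
      rintro _ ⟨u, rfl⟩
      exact horth u
    have h5 := congrFun hfun (y₁ - y₂)
    have h6 : y₁ - y₂ = 0 := by
      rwa [real_inner_self_eq_norm_sq, pow_eq_zero_iff (by norm_num), norm_eq_zero] at h5
    exact sub_eq_zero.mp h6
  · exact hj_compact.comp_clm B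
end

section
/- Let u : ℝⁿ → ℝ be a nonnegative Lipschitz function vanishing outside a bounded set, and for ε > 0 set u_ε(x) := max(u(x) − ε, 0). Then ∫_{ℝⁿ} |u(x) − u_ε(x)|² dx + ∫_{ℝⁿ} ‖Du(x) − Du_ε(x)‖² dx → 0 as ε → 0⁺; that is, the truncations (u − ε)₊ converge to u in the H¹(ℝⁿ) norm. -/
open MeasureTheory Filter Topology Set
open scoped NNReal

/-!
Write `u_ε = max (u - ε) 0`. Pointwise, `u - u_ε = min ε u` tends to `0` and is dominated by `u`.
For the derivatives no a.e. argument is needed: at every point `x` the derivatives `Du_ε x` and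
`Du x` eventually agree as `ε → 0⁺`. If `u x > 0`, then `u_ε = u - ε` near `x` once `ε < u x`; if
`u x = 0`, then `x` is a minimum of `u`, so `Du x = 0`, while `u_ε` vanishes near `x` by continuity.
Both derivatives are bounded by the Lipschitz constant and vanish off the compact support of `u`,
so dominated convergence applies to both integrals.
-/

theorem sub_max_sub_zero (a ε : ℝ) : a - max (a - ε) 0 = min ε a := by
  rw [← min_sub_sub_left, sub_sub_cancel, sub_zero]

theorem abs_sub_max_sub_zero_le {a ε : ℝ} (ha : 0 ≤ a) (hε : 0 ≤ ε) :
    |a - max (a - ε) 0| ≤ a := by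
  rw [sub_max_sub_zero, abs_of_nonneg (le_min hε ha)]
  exact min_le_right ε a

theorem LipschitzWith.max_sub_const_zero {α : Type*} [PseudoEMetricSpace α] {u : α → ℝ} {K : ℝ≥0}
    (hu : LipschitzWith K u) (ε : ℝ) :
    LipschitzWith K fun y => max (u y - ε) 0 := by
  simpa using (hu.sub (LipschitzWith.const ε)).max_const 0

section Truncation

variable {E : Type*} [NormedAddCommGroup E] [NormedSpace ℝ E] {u : E → ℝ} {x : E} {ε : ℝ}

theorem fderiv_max_sub_const_zero_of_lt (hu : ContinuousAt u x) (hε : ε < u x) :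
    fderiv ℝ (fun y => max (u y - ε) 0) x = fderiv ℝ u x := by
  have hloc : (fun y => max (u y - ε) 0) =ᶠ[𝓝 x] fun y => u y - ε := by
    filter_upwards [hu.eventually (lt_mem_nhds hε)] with y hy using max_eq_left (by linarith)
  rw [hloc.fderiv_eq, fderiv_sub_const]

theorem fderiv_max_sub_const_zero_of_gt (hu : ContinuousAt u x) (hε : u x < ε) :
    fderiv ℝ (fun y => max (u y - ε) 0) x = 0 := by
  have hloc : (fun y => max (u y - ε) 0) =ᶠ[𝓝 x] fun _ => 0 := by
    filter_upwards [hu.eventually (gt_mem_nhds hε)] with y hy using max_eq_right (by linarith)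
  rw [hloc.fderiv_eq, fderiv_const_apply]

theorem fderiv_max_sub_const_zero_of_notMem_tsupport (hε : 0 ≤ ε) (hx : x ∉ tsupport u) :
    fderiv ℝ (fun y => max (u y - ε) 0) x = 0 := by
  have hsupp : Function.support (fun y => max (u y - ε) 0) ⊆ Function.support u :=
    Function.support_subset_iff'.2 fun y hy => by simp [Function.notMem_support.1 hy, hε]
  exact fderiv_of_notMem_tsupport ℝ fun h => hx (closure_mono hsupp h)

theorem eventually_fderiv_max_sub_const_zero_eq (hu : ContinuousAt u x) (hu0 : ∀ y, 0 ≤ u y) :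
    ∀ᶠ ε in 𝓝[>] 0, fderiv ℝ (fun y => max (u y - ε) 0) x = fderiv ℝ u x := by
  rcases (hu0 x).eq_or_lt with hx | hx
  · have hmin : IsLocalMin u x := Eventually.of_forall fun y => hx ▸ hu0 y
    filter_upwards [self_mem_nhdsWithin] with ε (hε : 0 < ε)
    rw [fderiv_max_sub_const_zero_of_gt hu (hx ▸ hε), hmin.fderiv_eq_zero]
  · filter_upwards [Ioo_mem_nhdsGT hx] with ε hε
    exact fderiv_max_sub_const_zero_of_lt hu hε.2

theorem sq_norm_fderiv_sub_fderiv_max_sub_const_zero_le {K : ℝ≥0} (hu : LipschitzWith K u)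
    (hε : 0 ≤ ε) (x : E) :
    ‖fderiv ℝ u x - fderiv ℝ (fun y => max (u y - ε) 0) x‖ ^ 2 ≤
      (tsupport u).indicator (fun _ => (2 * K : ℝ) ^ 2) x := by
  by_cases hx : x ∈ tsupport u
  · rw [indicator_of_mem hx]
    gcongr
    calc _ ≤ ‖fderiv ℝ u x‖ + ‖fderiv ℝ (fun y => max (u y - ε) 0) x‖ := norm_sub_le _ _
      _ ≤ K + K := add_le_add (norm_fderiv_le_of_lipschitz ℝ hu)
          (norm_fderiv_le_of_lipschitz ℝ (hu.max_sub_const_zero ε))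
      _ = 2 * K := (two_mul _).symm
  · rw [indicator_of_notMem hx, fderiv_of_notMem_tsupport ℝ hx,
      fderiv_max_sub_const_zero_of_notMem_tsupport hε hx]
    simp

end Truncation

theorem tendsto_integral_sq_sub_max_sub_const_zero {X : Type*} [TopologicalSpace X]
    [MeasurableSpace X] [OpensMeasurableSpace X] (μ : Measure X) [IsFiniteMeasureOnCompacts μ]
    {u : X → ℝ} (hu : Continuous u) (hc : HasCompactSupport u)
    (hu0 : ∀ x, 0 ≤ u x) :
    Tendsto (fun ε => ∫ x, |u x - max (u x - ε) 0| ^ 2 ∂μ) (𝓝[>] 0) (𝓝 0) := by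
  have hc2 : HasCompactSupport (fun x => u x ^ 2) := hc.comp_left (g := fun t : ℝ => t ^ 2) (by simp)
  have hdom : Integrable (fun x => u x ^ 2) μ := (hu.pow 2).integrable_of_hasCompactSupport hc2
  have hbound : ∀ᶠ ε in 𝓝[>] (0 : ℝ), ∀ᵐ x ∂μ, ‖|u x - max (u x - ε) 0| ^ 2‖ ≤ u x ^ 2 := by
    filter_upwards [self_mem_nhdsWithin] with ε (hε : 0 < ε)
    refine Eventually.of_forall fun x => ?_
    rw [Real.norm_eq_abs, abs_of_nonneg (by positivity)]
    exact pow_le_pow_left₀ (abs_nonneg _) (abs_sub_max_sub_zero_le (hu0 x) hε.le) 2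
  have hlim : ∀ᵐ x ∂μ, Tendsto (fun ε => |u x - max (u x - ε) 0| ^ 2) (𝓝[>] 0) (𝓝 0) := by
    refine Eventually.of_forall fun x => ?_
    have hcont : Continuous fun ε => |u x - max (u x - ε) 0| ^ 2 := by fun_prop
    simpa [hu0 x] using (hcont.tendsto 0).mono_left nhdsWithin_le_nhds
  simpa using tendsto_integral_filter_of_dominated_convergence _
    (Eventually.of_forall fun ε => (Continuous.aestronglyMeasurable (by fun_prop))) hbound hdom hlim

theorem tendsto_integral_sq_norm_fderiv_sub_fderiv_max_sub_const_zero {E : Type*}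
    [NormedAddCommGroup E] [NormedSpace ℝ E] [FiniteDimensional ℝ E] [MeasurableSpace E]
    [OpensMeasurableSpace E] (μ : Measure E) [IsFiniteMeasureOnCompacts μ] {u : E → ℝ} {K : ℝ≥0}
    (hu : LipschitzWith K u) (hc : HasCompactSupport u) (hu0 : ∀ x, 0 ≤ u x) :
    Tendsto (fun ε => ∫ x, ‖fderiv ℝ u x - fderiv ℝ (fun y => max (u y - ε) 0) x‖ ^ 2 ∂μ)
      (𝓝[>] 0) (𝓝 0) := by
  have hdom : Integrable ((tsupport u).indicator fun _ => (2 * K : ℝ) ^ 2) μ :=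
    (integrable_indicator_iff (isClosed_tsupport u).measurableSet).2
      (integrableOn_const hc.isCompact.measure_lt_top.ne)
  have hbound : ∀ᶠ ε in 𝓝[>] (0 : ℝ), ∀ᵐ x ∂μ,
      ‖‖fderiv ℝ u x - fderiv ℝ (fun y => max (u y - ε) 0) x‖ ^ 2‖ ≤
        (tsupport u).indicator (fun _ => (2 * K : ℝ) ^ 2) x := by
    filter_upwards [self_mem_nhdsWithin] with ε (hε : 0 < ε)
    refine Eventually.of_forall fun x => ?_
    rw [norm_pow, norm_norm]
    exact sq_norm_fderiv_sub_fderiv_max_sub_const_zero_le hu hε.le x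
  have hlim : ∀ᵐ x ∂μ, Tendsto
      (fun ε => ‖fderiv ℝ u x - fderiv ℝ (fun y => max (u y - ε) 0) x‖ ^ 2) (𝓝[>] 0) (𝓝 0) := by
    refine Eventually.of_forall fun x => tendsto_const_nhds.congr' ?_
    filter_upwards [eventually_fderiv_max_sub_const_zero_eq (x := x) hu.continuous.continuousAt hu0]
      with ε hε
    simp [hε]
  simpa using tendsto_integral_filter_of_dominated_convergence _
    (Eventually.of_forall fun ε =>
      (((measurable_fderiv ℝ u).sub (measurable_fderiv ℝ _)).norm.pow_const 2).aestronglyMeasurable)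
    hbound hdom hlim

/-- **`H¹`-convergence of the truncations `(u − ε)₊` to `u`.**
If `u : ℝⁿ → ℝ` is a nonnegative Lipschitz function vanishing outside a bounded set, then
the truncations `u_ε = max (u − ε) 0` converge to `u` in the `H¹(ℝⁿ)` norm as `ε → 0⁺`. -/
theorem tendsto_H1_truncation_of_lipschitz
    {n : ℕ} (u : EuclideanSpace ℝ (Fin n) → ℝ) (K : ℝ≥0)
    (hu : LipschitzWith K u) (hu_nonneg : ∀ x, 0 ≤ u x)
    (s : Set (EuclideanSpace ℝ (Fin n))) (hs : Bornology.IsBounded s)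
    (hu0 : ∀ x ∉ s, u x = 0) :
    Tendsto
      (fun ε : ℝ => (∫ x, |u x - max (u x - ε) 0| ^ 2) +
        ∫ x, ‖fderiv ℝ u x - fderiv ℝ (fun y => max (u y - ε) 0) x‖ ^ 2)
      (nhdsWithin 0 (Set.Ioi 0)) (nhds 0) := by
  have hc : HasCompactSupport u :=
    HasCompactSupport.intro hs.isCompact_closure fun x hx => hu0 x fun h => hx (subset_closure h)
  simpa using (tendsto_integral_sq_sub_max_sub_const_zero volume hu.continuous hc hu_nonneg).add
    (tendsto_integral_sq_norm_fderiv_sub_fderiv_max_sub_const_zero volume hu hc hu_nonneg)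
end

section
/- Let 0 < r₀ < e^{-1}. Then there exists a smooth function f : ℝ² → ℝ with f = 0 on the closed ball of radius r₀ centered at the origin such that ∫_{B₁(0)} |∇f(x)|² dx − ∫₀^{2π} f(cos θ, sin θ)² dθ < 0. (Consequently, the equatorial disc in the modified ball M_{r₀} has index ind_∂ equal to 1 when r₀ < e^{-1}; a suitable smoothing of f(x) = log(|x|/r₀) furnishes the negative direction.) -/
/-!
The model negative direction is `x ↦ log (‖x‖² / r₀²)`: writing `L = log (1 / r₀²)`, its Dirichlet
energy on the unit disc is `4πL` while its boundary term is `2πL²`, so `Q < 0` exactly when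
`L > 2`, i.e. `r₀ < e⁻¹`. We smooth it as `ψ (‖x‖²)` with `ψ = smoothLog a m`, `ψ' t = χ t / t`, where the cutoff `χ`
rises smoothly from `0` at `a = r₀²` to `1` at some `m < e⁻²`. Since `t ψ' t = χ t ≤ 1`, the energy
`π ∫₀¹ 4 t ψ'(t)² dt` is still at most `4π ψ(1)`, while `ψ(1) ≥ -log m > 2`.
-/

open MeasureTheory Real Metric
open scoped ContDiff

theorem HasDerivAt.hasGradientAt_comp_norm_sq {E : Type*} [NormedAddCommGroup E]
    [InnerProductSpace ℝ E] [CompleteSpace E] {ψ : ℝ → ℝ} {ψ' : ℝ} {x : E}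
    (h : HasDerivAt ψ ψ' (‖x‖ ^ 2)) :
    HasGradientAt (fun y ↦ ψ (‖y‖ ^ 2)) ((2 * ψ') • x) x := by
  rw [hasGradientAt_iff_hasFDerivAt]
  refine (h.comp_hasFDerivAt x (hasStrictFDerivAt_norm_sq x).hasFDerivAt).congr_fderiv ?_
  ext y
  simp only [smul_apply, coe_innerSL_apply, nsmul_eq_mul, Nat.cast_ofNat,
    smul_eq_mul, map_smul, InnerProductSpace.toDual_apply_apply]
  ring

theorem integral_ball_comp_norm_sq {G : ℝ → ℝ} (hG : Continuous G) {R : ℝ} (hR : 0 ≤ R) :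
    ∫ x in ball (0 : EuclideanSpace ℝ (Fin 2)) R, G (‖x‖ ^ 2) = π * ∫ u in 0..R ^ 2, G u := by
  have polar : ∫ x in ball (0 : EuclideanSpace ℝ (Fin 2)) R, G (‖x‖ ^ 2)
      = 2 * π * ∫ r in 0..R, r * G (r ^ 2) := by
    have h := integral_fun_norm_addHaar (volume : Measure (EuclideanSpace ℝ (Fin 2)))
      ((Set.Iio R).indicator fun r ↦ G (r ^ 2))
    simp only [finrank_euclideanSpace_fin, smul_eq_mul, nsmul_eq_mul, Nat.reduceSub, pow_one,
      ← Set.indicator_mul_right (f := fun r ↦ r), setIntegral_indicator measurableSet_Iio,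
      Set.Ioi_inter_Iio, ← integral_Ioc_eq_integral_Ioo,
      ← intervalIntegral.integral_of_le hR] at h
    rw [← integral_indicator measurableSet_ball]
    convert h using 1
    · congr with x
      simp [Set.indicator]
    · simp only [Nat.cast_ofNat, measureReal_def, EuclideanSpace.volume_ball_fin_two,
        ENNReal.ofReal_one, one_pow, one_mul, ENNReal.toReal_ofReal pi_nonneg]
      ring
  have subst : ∫ r in 0..R, G (r ^ 2) * (2 * r) = ∫ u in 0..R ^ 2, G u := by
    convert intervalIntegral.integral_comp_mul_deriv (a := 0) (b := R) (f := fun r ↦ r ^ 2)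
      (fun r _ ↦ by simpa using hasDerivAt_pow 2 r) (by fun_prop) hG using 2 <;> simp
  rw [polar, ← subst, ← intervalIntegral.integral_const_mul,
    ← intervalIntegral.integral_const_mul]
  congr 1 with r
  ring

theorem integral_ball_norm_sq_gradient_comp_norm_sq {ψ g : ℝ → ℝ}
    (hψ : ∀ u, HasDerivAt ψ (g u) u) (hg : Continuous g) {R : ℝ} (hR : 0 ≤ R) :
    ∫ x in ball (0 : EuclideanSpace ℝ (Fin 2)) R, ‖gradient (fun y ↦ ψ (‖y‖ ^ 2)) x‖ ^ 2
      = π * ∫ u in 0..R ^ 2, 4 * u * g u ^ 2 := by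
  have hgrad (x : EuclideanSpace ℝ (Fin 2)) :
      ‖gradient (fun y ↦ ψ (‖y‖ ^ 2)) x‖ ^ 2 = 4 * ‖x‖ ^ 2 * g (‖x‖ ^ 2) ^ 2 := by
    rw [(hψ _).hasGradientAt_comp_norm_sq.gradient, norm_smul, Real.norm_eq_abs, mul_pow,
      sq_abs]
    ring
  simp only [hgrad]
  exact integral_ball_comp_norm_sq (G := fun u ↦ 4 * u * g u ^ 2) (by fun_prop) hR

theorem norm_cos_sin (θ : ℝ) :
    ‖(WithLp.equiv 2 (Fin 2 → ℝ)).symm ![cos θ, sin θ]‖ = 1 := by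
  simp [EuclideanSpace.norm_eq, Fin.sum_univ_two]

noncomputable def smoothLogDeriv (a m t : ℝ) : ℝ := smoothTransition ((t - a) / (m - a)) / t

noncomputable def smoothLog (a m s : ℝ) : ℝ := ∫ t in 0..s, smoothLogDeriv a m t

section SmoothLog

variable {a m : ℝ}

theorem smoothLogDeriv_of_le (ham : a < m) {t : ℝ} (ht : t ≤ a) : smoothLogDeriv a m t = 0 := by
  rw [smoothLogDeriv, smoothTransition.zero_of_nonpos
    (div_nonpos_of_nonpos_of_nonneg (by linarith) (by linarith)), zero_div]

theorem smoothLogDeriv_of_ge (ham : a < m) {t : ℝ} (ht : m ≤ t) :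
    smoothLogDeriv a m t = t⁻¹ := by
  rw [smoothLogDeriv, smoothTransition.one_of_one_le ((one_le_div (by linarith)).2 (by linarith)),
    one_div]

theorem smoothLogDeriv_nonneg (ha : 0 ≤ a) (ham : a < m) (t : ℝ) : 0 ≤ smoothLogDeriv a m t := by
  rcases le_or_gt t a with ht | ht
  · rw [smoothLogDeriv_of_le ham ht]
  · exact div_nonneg (smoothTransition.nonneg _) (by linarith)

theorem mul_smoothLogDeriv_le_one (a m t : ℝ) : t * smoothLogDeriv a m t ≤ 1 := by
  rcases eq_or_ne t 0 with rfl | ht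
  · simp
  · rw [smoothLogDeriv, mul_div_cancel₀ _ ht]
    exact smoothTransition.le_one _

theorem contDiff_smoothLogDeriv (ha : 0 < a) (ham : a < m) :
    ContDiff ℝ ∞ (smoothLogDeriv a m) := by
  refine contDiff_iff_contDiffAt.2 fun t ↦ ?_
  rcases ne_or_eq t 0 with ht | rfl
  · exact (smoothTransition.contDiff.comp (by fun_prop)).contDiffAt.div contDiffAt_id ht
  · refine (contDiffAt_const (c := 0)).congr_of_eventuallyEq ?_
    filter_upwards [Iio_mem_nhds ha] with s hs
    exact smoothLogDeriv_of_le ham hs.le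

theorem continuous_smoothLogDeriv (ha : 0 < a) (ham : a < m) : Continuous (smoothLogDeriv a m) :=
  (contDiff_smoothLogDeriv ha ham).continuous

theorem hasDerivAt_smoothLog (ha : 0 < a) (ham : a < m) (s : ℝ) :
    HasDerivAt (smoothLog a m) (smoothLogDeriv a m s) s :=
  ((continuous_smoothLogDeriv ha ham).integral_hasStrictDerivAt 0 s).hasDerivAt

theorem contDiff_smoothLog (ha : 0 < a) (ham : a < m) : ContDiff ℝ ∞ (smoothLog a m) :=
  contDiff_infty_iff_deriv.2
    ⟨fun s ↦ (hasDerivAt_smoothLog ha ham s).differentiableAt, by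
      rw [funext fun s ↦ (hasDerivAt_smoothLog ha ham s).deriv]
      exact contDiff_smoothLogDeriv ha ham⟩

theorem smoothLog_of_le (ha : 0 ≤ a) (ham : a < m) {s : ℝ} (hs : s ≤ a) :
    smoothLog a m s = 0 := by
  rw [smoothLog, intervalIntegral.integral_congr (g := fun _ ↦ 0), intervalIntegral.integral_zero]
  intro t ht
  exact smoothLogDeriv_of_le ham (ht.2.trans (max_le ha hs))

theorem neg_log_le_smoothLog_one (ha : 0 < a) (ham : a < m) (hm : m ≤ 1) :
    -log m ≤ smoothLog a m 1 := by
  have hm0 : 0 < m := ha.trans ham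
  have hint := (continuous_smoothLogDeriv ha ham).intervalIntegrable (μ := volume)
  have tail : ∫ t in m..1, smoothLogDeriv a m t = -log m := by
    rw [intervalIntegral.integral_congr fun t ht ↦ smoothLogDeriv_of_ge ham ?_,
      integral_inv_of_pos hm0 one_pos, log_div one_ne_zero hm0.ne', log_one, zero_sub]
    exact (Set.uIcc_of_le hm ▸ ht).1
  have head : 0 ≤ ∫ t in 0..m, smoothLogDeriv a m t :=
    intervalIntegral.integral_nonneg hm0.le fun t _ ↦ smoothLogDeriv_nonneg ha.le ham t
  rw [smoothLog, ← intervalIntegral.integral_add_adjacent_intervals (hint 0 m) (hint m 1), tail]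
  linarith

theorem integral_mul_sq_smoothLogDeriv_le (ha : 0 < a) (ham : a < m) {s : ℝ} (hs : 0 ≤ s) :
    ∫ u in 0..s, 4 * u * smoothLogDeriv a m u ^ 2 ≤ 4 * smoothLog a m s := by
  have hg := continuous_smoothLogDeriv ha ham
  rw [smoothLog, ← intervalIntegral.integral_const_mul]
  refine intervalIntegral.integral_mono_on hs ((by fun_prop : Continuous _).intervalIntegrable _ _)
    ((by fun_prop : Continuous _).intervalIntegrable _ _) fun u _ ↦ ?_
  have := mul_smoothLogDeriv_le_one a m u
  have := smoothLogDeriv_nonneg ha.le ham u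
  nlinarith

end SmoothLog

/-- **Instability of the equatorial disc in the modified ball `M_{r₀}` for `r₀ < e⁻¹`.**
If `0 < r₀ < e⁻¹`, there is a smooth function `f : ℝ² → ℝ` vanishing on the closed ball of
radius `r₀` around the origin with
`Q(f) = ∫_{B₁} |∇f|² − ∫₀^{2π} f(cos θ, sin θ)² dθ < 0`. -/
theorem exists_negative_direction_of_lt_inv_exp
    (r₀ : ℝ) (hr₀ : 0 < r₀) (hr₀e : r₀ < Real.exp (-1)) :
    ∃ f : EuclideanSpace ℝ (Fin 2) → ℝ, ContDiff ℝ ∞ f ∧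
      (∀ x ∈ Metric.closedBall (0 : EuclideanSpace ℝ (Fin 2)) r₀, f x = 0) ∧
      (∫ x in Metric.ball (0 : EuclideanSpace ℝ (Fin 2)) 1, ‖gradient f x‖ ^ 2) -
        (∫ θ in (0:ℝ)..(2 * Real.pi),
          f ((WithLp.equiv 2 (Fin 2 → ℝ)).symm ![Real.cos θ, Real.sin θ]) ^ 2) < 0 := by
  set a := r₀ ^ 2
  have ha : 0 < a := by positivity
  have ha2 : a < exp (-2) :=
    calc a < exp (-1) ^ 2 := pow_lt_pow_left₀ hr₀e hr₀.le two_ne_zero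
      _ = exp (-2) := by rw [← exp_nat_mul]; norm_num
  obtain ⟨m, ham, hm2⟩ := exists_between ha2
  have hψ : 2 < smoothLog a m 1 := by
    have := neg_log_le_smoothLog_one ha ham (hm2.le.trans (exp_le_one_iff.2 (by norm_num)))
    have := (log_lt_iff_lt_exp (ha.trans ham)).2 hm2
    linarith
  refine ⟨fun x ↦ smoothLog a m (‖x‖ ^ 2), (contDiff_smoothLog ha ham).comp (contDiff_norm_sq ℝ),
    fun x hx ↦ smoothLog_of_le ha.le ham ?_, ?_⟩
  · exact pow_le_pow_left₀ (norm_nonneg x) (mem_closedBall_zero_iff.1 hx) 2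
  rw [integral_ball_norm_sq_gradient_comp_norm_sq (hasDerivAt_smoothLog ha ham)
    (continuous_smoothLogDeriv ha ham) zero_le_one]
  simp only [norm_cos_sin, intervalIntegral.integral_const, one_pow, smul_eq_mul, sub_zero]
  calc π * (∫ u in 0..1, 4 * u * smoothLogDeriv a m u ^ 2) - 2 * π * smoothLog a m 1 ^ 2
      ≤ π * (4 * smoothLog a m 1) - 2 * π * smoothLog a m 1 ^ 2 := by
        gcongr
        exact integral_mul_sq_smoothLogDeriv_le ha ham zero_le_one
    _ = -(2 * π * smoothLog a m 1 * (smoothLog a m 1 - 2)) := by ring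
    _ < 0 := neg_neg_of_pos <| mul_pos (by positivity) (by linarith)
end

section
/- Let e^{-1} ≤ r₀ < 1. Then for every smooth function f : ℝ² → ℝ with f = 0 on the closed ball of radius r₀ centered at the origin, one has ∫_{B₁(0)} |∇f(x)|² dx − ∫₀^{2π} f(cos θ, sin θ)² dθ ≥ 0. (Consequently, the equatorial disc in the modified ball M_{r₀} has index ind_∂ equal to 0 when r₀ ≥ e^{-1}.) -/
open MeasureTheory Real Set intervalIntegral
open scoped ContDiff

/-!
Along the ray in direction `u`, `f u = ∫_{r₀}^1 ∂_r f(r u) dr` because `f (r₀ u) = 0`. The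
Cauchy–Schwarz inequality with weight `r` (the radial part of the area element) gives
`f(u)² ≤ (∫_{r₀}^1 dr / r) · ∫_{r₀}^1 r |∇f(r u)|² dr = log (1/r₀) · ∫_{r₀}^1 r |∇f(r u)|² dr`,
and `log (1/r₀) ≤ 1` exactly when `r₀ ≥ e⁻¹`. Integrating over the angle, the right-hand side
becomes the Dirichlet energy of `f` on the unit disc in polar coordinates.
-/

theorem sq_intervalIntegral_le_integral_inv_mul_integral_mul_sq {w d : ℝ → ℝ} {a b : ℝ}
    (hab : a ≤ b) (hw : ∀ x ∈ Icc a b, 0 < w x) (hd : IntervalIntegrable d volume a b)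
    (hw_inv : IntervalIntegrable (fun x => (w x)⁻¹) volume a b)
    (hwd : IntervalIntegrable (fun x => w x * d x ^ 2) volume a b) :
    (∫ x in a..b, d x) ^ 2 ≤ (∫ x in a..b, (w x)⁻¹) * ∫ x in a..b, w x * d x ^ 2 := by
  set A := ∫ x in a..b, w x * d x ^ 2
  set B := ∫ x in a..b, d x
  set L := ∫ x in a..b, (w x)⁻¹
  -- `∫ w⁻¹ (t w d - 1)² ≥ 0` is a quadratic in `t` with nonpositive discriminant.
  have hquad : ∀ t : ℝ, 0 ≤ A * (t * t) + (-2 * B) * t + L := by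
    intro t
    have hint : ∫ x in a..b, (t * t * (w x * d x ^ 2) - 2 * t * d x + (w x)⁻¹) =
        A * (t * t) + (-2 * B) * t + L := by
      rw [integral_add ((hwd.const_mul _).sub (hd.const_mul _)) hw_inv,
        integral_sub (hwd.const_mul _) (hd.const_mul _), intervalIntegral.integral_const_mul,
        intervalIntegral.integral_const_mul]
      ring
    rw [← hint]
    refine integral_nonneg hab fun x hx => ?_
    have hwx := hw x hx
    have : t * t * (w x * d x ^ 2) - 2 * t * d x + (w x)⁻¹ =
        (w x)⁻¹ * (t * w x * d x - 1) ^ 2 := by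
      field_simp
      ring
    rw [this]
    positivity
  have := discrim_le_zero hquad
  rw [discrim] at this
  nlinarith

section Ray

variable {E : Type*} [NormedAddCommGroup E] [InnerProductSpace ℝ E] [CompleteSpace E]
  {f : E → ℝ} {u : E} {r₀ : ℝ}

theorem norm_gradient (x : E) : ‖gradient f x‖ = ‖fderiv ℝ f x‖ :=
  (InnerProductSpace.toDual ℝ E).symm.norm_map _

theorem continuous_gradient (hf : ContDiff ℝ 1 f) : Continuous (gradient f) :=
  (InnerProductSpace.toDual ℝ E).symm.continuous.comp (hf.continuous_fderiv one_ne_zero)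

theorem sq_le_log_inv_mul_integral_norm_gradient_sq (hf : ContDiff ℝ 1 f) (hu : ‖u‖ ≤ 1)
    (hr₀ : 0 < r₀) (hr₀1 : r₀ ≤ 1) (hfr₀ : f (r₀ • u) = 0) :
    f u ^ 2 ≤ log r₀⁻¹ * ∫ r in r₀..1, r * ‖gradient f (r • u)‖ ^ 2 := by
  set d : ℝ → ℝ := fun r => fderiv ℝ f (r • u) u
  have hd_cont : Continuous d := by
    have := hf.continuous_fderiv one_ne_zero
    fun_prop
  have hftc : ∫ r in r₀..1, d r = f u := by
    rw [integral_eq_sub_of_hasDerivAt (f := fun r => f (r • u)) (fun r _ => ?_)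
      (hd_cont.intervalIntegrable _ _), one_smul, hfr₀, sub_zero]
    exact ((hf.differentiable one_ne_zero _).hasFDerivAt.comp_hasDerivAt r
      ((hasDerivAt_id r).smul_const u)).congr_deriv (by simp [d])
  have hd_le : ∀ r, |d r| ≤ ‖gradient f (r • u)‖ := fun r =>
    calc |d r| ≤ ‖fderiv ℝ f (r • u)‖ * ‖u‖ := (fderiv ℝ f (r • u)).le_opNorm u
      _ ≤ ‖gradient f (r • u)‖ := by
        rw [norm_gradient]
        exact mul_le_of_le_one_right (norm_nonneg _) hu
  have hpos : ∀ r ∈ Icc r₀ 1, 0 < r := fun r hr => hr₀.trans_le hr.1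
  have hlog : ∫ r in r₀..1, r⁻¹ = log r₀⁻¹ := by
    rw [integral_inv (by rw [uIcc_of_le hr₀1]; exact fun h => (hpos 0 h).false), one_div]
  have hgrad : Continuous fun r : ℝ => r * ‖gradient f (r • u)‖ ^ 2 := by
    have := continuous_gradient hf
    fun_prop
  have hdsq : Continuous fun r => r * d r ^ 2 := continuous_id.mul (hd_cont.pow 2)
  calc f u ^ 2 ≤ (∫ r in r₀..1, r⁻¹) * ∫ r in r₀..1, r * d r ^ 2 := by
        rw [← hftc]
        exact sq_intervalIntegral_le_integral_inv_mul_integral_mul_sq hr₀1 hpos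
          (hd_cont.intervalIntegrable _ _)
          (intervalIntegrable_inv (fun r hr => (hpos r (uIcc_of_le hr₀1 ▸ hr)).ne')
            continuousOn_id)
          (hdsq.intervalIntegrable _ _)
    _ ≤ log r₀⁻¹ * ∫ r in r₀..1, r * ‖gradient f (r • u)‖ ^ 2 := by
        rw [hlog]
        refine mul_le_mul_of_nonneg_left (integral_mono_on hr₀1 (hdsq.intervalIntegrable _ _)
          (hgrad.intervalIntegrable _ _) fun r hr => ?_)
          (log_nonneg ((one_le_inv₀ hr₀).2 hr₀1))
        exact mul_le_mul_of_nonneg_left (sq_le_sq.2 ((hd_le r).trans (le_abs_self _)))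
          (hpos r hr).le

theorem sq_le_integral_norm_gradient_sq_of_inv_exp_le (hf : ContDiff ℝ 1 f) (hu : ‖u‖ ≤ 1)
    (hr₀e : exp (-1) ≤ r₀) (hr₀1 : r₀ ≤ 1)
    (hf0 : ∀ x ∈ Metric.closedBall (0 : E) r₀, f x = 0) :
    f u ^ 2 ≤ ∫ r in (0 : ℝ)..1, r * ‖gradient f (r • u)‖ ^ 2 := by
  have hr₀ : 0 < r₀ := (exp_pos _).trans_le hr₀e
  have hfr₀ : f (r₀ • u) = 0 := hf0 _ <| by
    rw [mem_closedBall_zero_iff, norm_smul, norm_of_nonneg hr₀.le]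
    exact mul_le_of_le_one_right hr₀.le hu
  have hlog : log r₀⁻¹ ≤ 1 := by
    rw [log_inv, neg_le, le_log_iff_exp_le hr₀]
    exact hr₀e
  have hG : Continuous fun r : ℝ => r * ‖gradient f (r • u)‖ ^ 2 := by
    have := continuous_gradient hf
    fun_prop
  have hG_nonneg : ∀ r ∈ Icc r₀ 1, 0 ≤ r * ‖gradient f (r • u)‖ ^ 2 := fun r hr =>
    mul_nonneg (hr₀.le.trans hr.1) (sq_nonneg _)
  calc f u ^ 2 ≤ log r₀⁻¹ * ∫ r in r₀..1, r * ‖gradient f (r • u)‖ ^ 2 :=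
        sq_le_log_inv_mul_integral_norm_gradient_sq hf hu hr₀ hr₀1 hfr₀
    _ ≤ ∫ r in r₀..1, r * ‖gradient f (r • u)‖ ^ 2 :=
        mul_le_of_le_one_left (integral_nonneg hr₀1 hG_nonneg) hlog
    _ ≤ ∫ r in (0 : ℝ)..1, r * ‖gradient f (r • u)‖ ^ 2 :=
        integral_mono_interval hr₀.le hr₀1 le_rfl
          (ae_restrict_of_forall_mem measurableSet_Ioc fun r hr => mul_nonneg hr.1.le (sq_nonneg _))
          (hG.intervalIntegrable _ _)

end Ray

section Polar

noncomputable def unitVec (θ : ℝ) : EuclideanSpace ℝ (Fin 2) :=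
  (WithLp.equiv 2 (Fin 2 → ℝ)).symm ![cos θ, sin θ]

theorem norm_unitVec (θ : ℝ) : ‖unitVec θ‖ = 1 := by
  simp [EuclideanSpace.norm_eq, unitVec, Fin.sum_univ_two]

theorem continuous_unitVec : Continuous unitVec :=
  (PiLp.continuous_toLp 2 _).comp <| continuous_pi fun i => by
    fin_cases i <;> simp <;> fun_prop

theorem unitVec_periodic : Function.Periodic unitVec (2 * π) := fun θ => by
  simp only [unitVec, cos_add_two_pi, sin_add_two_pi]

noncomputable def euclideanSpaceEquivProd : EuclideanSpace ℝ (Fin 2) ≃ᵐ ℝ × ℝ :=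
  (MeasurableEquiv.toLp 2 (Fin 2 → ℝ)).symm.trans MeasurableEquiv.finTwoArrow

theorem measurePreserving_euclideanSpaceEquivProd :
    MeasurePreserving euclideanSpaceEquivProd volume volume :=
  (EuclideanSpace.volume_preserving_symm_measurableEquiv_toLp (Fin 2)).trans
    (volume_preserving_finTwoArrow ℝ)

theorem euclideanSpaceEquivProd_symm_polarCoord_symm (r θ : ℝ) :
    euclideanSpaceEquivProd.symm (polarCoord.symm (r, θ)) = r • unitVec θ := by
  ext i
  fin_cases i <;> simp [euclideanSpaceEquivProd, unitVec, MeasurableEquiv.finTwoArrow]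

theorem integral_ball_eq_integral_integral_polar {g : EuclideanSpace ℝ (Fin 2) → ℝ}
    (hg : Continuous g) :
    ∫ x in Metric.ball 0 1, g x =
      ∫ θ in -π..π, ∫ r in (0 : ℝ)..1, r * g (r • unitVec θ) := by
  set G : ℝ × ℝ → ℝ := fun p => p.1 * g (p.1 • unitVec p.2)
  have hG : Continuous G := by
    have := continuous_unitVec
    fun_prop
  calc ∫ x in Metric.ball 0 1, g x
        = ∫ p, (Metric.ball 0 1).indicator g (euclideanSpaceEquivProd.symm p) := by
        rw [← MeasureTheory.integral_indicator measurableSet_ball,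
          measurePreserving_euclideanSpaceEquivProd.symm.integral_comp']
    _ = ∫ p in polarCoord.target, (Iio 1 ×ˢ univ).indicator G p := by
        rw [← integral_comp_polarCoord_symm]
        refine setIntegral_congr_fun polarCoord.open_target.measurableSet fun ⟨r, θ⟩ hp => ?_
        have hr : 0 < r := hp.1
        have hmem :
            r • unitVec θ ∈ Metric.ball 0 1 ↔ (r, θ) ∈ Iio 1 ×ˢ (univ : Set ℝ) := by
          simp [norm_smul, norm_unitVec, abs_of_pos hr]
        rw [euclideanSpaceEquivProd_symm_polarCoord_symm, smul_eq_mul]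
        by_cases h : (r, θ) ∈ Iio 1 ×ˢ (univ : Set ℝ)
        · rw [indicator_of_mem h, indicator_of_mem (hmem.2 h)]
        · rw [indicator_of_notMem h, indicator_of_notMem (mt hmem.1 h), mul_zero]
    _ = ∫ p in Ioo (0 : ℝ) 1 ×ˢ Ioo (-π) π, G p := by
        rw [setIntegral_indicator (measurableSet_Iio.prod MeasurableSet.univ)]
        congr 2
        ext ⟨r, θ⟩
        simp [polarCoord, and_comm, and_assoc]
    _ = ∫ θ in Ioo (-π) π, ∫ r in Ioo (0 : ℝ) 1, G (r, θ) := by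
        rw [Measure.volume_eq_prod, ← setIntegral_prod_swap, setIntegral_prod]
        · rfl
        rw [← Measure.volume_eq_prod]
        exact ((hG.comp continuous_swap).continuousOn.integrableOn_compact
          (isCompact_Icc.prod isCompact_Icc)).mono_set
          (prod_mono Ioo_subset_Icc_self Ioo_subset_Icc_self)
    _ = ∫ θ in -π..π, ∫ r in (0 : ℝ)..1, r * g (r • unitVec θ) := by
        simp_rw [G, integral_of_le zero_le_one, integral_of_le (neg_le_self pi_pos.le),
          integral_Ioc_eq_integral_Ioo]

end Polar

/-- **Stability of the equatorial disc in the modified ball `M_{r₀}` for `r₀ ≥ e⁻¹`.**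
If `e⁻¹ ≤ r₀ < 1`, then every smooth function `f : ℝ² → ℝ` vanishing on the closed ball of
radius `r₀` around the origin satisfies
`Q(f) = ∫_{B₁} |∇f|² − ∫₀^{2π} f(cos θ, sin θ)² dθ ≥ 0`. -/
theorem secondVariation_nonneg_of_inv_exp_le
    (r₀ : ℝ) (hr₀e : Real.exp (-1) ≤ r₀) (hr₀1 : r₀ < 1) :
    ∀ f : EuclideanSpace ℝ (Fin 2) → ℝ, ContDiff ℝ ∞ f →
      (∀ x ∈ Metric.closedBall (0 : EuclideanSpace ℝ (Fin 2)) r₀, f x = 0) →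
      0 ≤ (∫ x in Metric.ball (0 : EuclideanSpace ℝ (Fin 2)) 1, ‖gradient f x‖ ^ 2) -
        ∫ θ in (0:ℝ)..(2 * Real.pi),
          f ((WithLp.equiv 2 (Fin 2 → ℝ)).symm ![Real.cos θ, Real.sin θ]) ^ 2 := by
  intro f hf hf0
  have hf1 : ContDiff ℝ 1 f := hf.of_le (by exact_mod_cast le_top)
  have hgrad := continuous_gradient hf1
  have hbdy : Continuous fun θ => f (unitVec θ) ^ 2 :=
    (hf.continuous.comp continuous_unitVec).pow 2
  have hrad :
      Continuous fun θ => ∫ r in (0 : ℝ)..1, r * ‖gradient f (r • unitVec θ)‖ ^ 2 := by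
    have := continuous_unitVec
    exact continuous_parametric_intervalIntegral_of_continuous' (by fun_prop) 0 1
  rw [sub_nonneg]
  calc ∫ θ in (0 : ℝ)..2 * π, f (unitVec θ) ^ 2 = ∫ θ in -π..π, f (unitVec θ) ^ 2 := by
        have := (unitVec_periodic.comp fun x => f x ^ 2).intervalIntegral_add_eq 0 (-π)
        rwa [zero_add, show -π + 2 * π = π by ring] at this
    _ ≤ ∫ θ in -π..π, ∫ r in (0 : ℝ)..1, r * ‖gradient f (r • unitVec θ)‖ ^ 2 :=
        integral_mono_on (by linarith [pi_pos]) (hbdy.intervalIntegrable _ _)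
          (hrad.intervalIntegrable _ _) fun θ _ =>
            sq_le_integral_norm_gradient_sq_of_inv_exp_le hf1 (norm_unitVec θ).le hr₀e hr₀1.le
              hf0
    _ = ∫ x in Metric.ball 0 1, ‖gradient f x‖ ^ 2 :=
        (integral_ball_eq_integral_integral_polar (hgrad.norm.pow 2)).symm
end

section
/- For every 0 < r₀ < 1 and every integer N ≥ 1 there exist smooth functions ρ₁, …, ρ_N : ℝ² → ℝ with 0 ≤ ρ_k ≤ 1 for each k, such that: (i) the support of each ρ_k is compact and contained in the open ball B_{r₀}(0) ⊂ ℝ²; (ii) the supports of ρ_k and ρ_h are disjoint whenever k ≠ h; (iii) ∫_{ℝ²} |∇ρ_k(x)|² dx < 2π/N for each k; and (iv) for each k there exists a point x_k with ρ_k(x_k) = 1. -/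
/-!
Points have zero capacity in the plane. The capacitary potential `log (R / ‖x - c‖) / log (R / ε)`
of the annulus `ε ≤ ‖x - c‖ ≤ R` has Dirichlet energy `2π / log (R / ε)`, which tends to `0` as
`ε → 0`. A smooth variant is `smoothTransition (log ((R² + ε²) / (‖x - c‖² + ε²)) / L)` with
`L = log ((R² + ε²) / ε²)`: it equals `1` at `c`, vanishes off the closed ball of radius `R`,
and in polar coordinates its energy is at most `4π C² / L`, where `C` bounds the derivative of
`smoothTransition`. Bumps of this kind around `N` well separated centres in `B_{r₀}(0)` give the
theorem.
-/

open MeasureTheory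
open scoped ContDiff

open Real Set Metric

namespace Real.smoothTransition

lemma deriv_eq_zero_of_notMem_Icc {t : ℝ} (ht : t ∉ Icc (0 : ℝ) 1) :
    deriv smoothTransition t = 0 := by
  rcases not_and_or.mp ht with ht | ht <;> rw [not_le] at ht
  · have : smoothTransition =ᶠ[nhds t] fun _ => 0 := by
      filter_upwards [Iio_mem_nhds ht] with s hs using zero_of_nonpos hs.le
    rw [this.deriv_eq, deriv_const]
  · have : smoothTransition =ᶠ[nhds t] fun _ => 1 := by
      filter_upwards [Ioi_mem_nhds ht] with s hs using one_of_one_le hs.le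
    rw [this.deriv_eq, deriv_const]

lemma exists_abs_deriv_le : ∃ C, ∀ t, |deriv smoothTransition t| ≤ C :=
  (smoothTransition.contDiff (n := 1).continuous_deriv le_rfl).bounded_above_of_compact_support
    (.intro isCompact_Icc fun _ => deriv_eq_zero_of_notMem_Icc)

end Real.smoothTransition

lemma norm_gradient_eq_norm_fderiv {F : Type*} [NormedAddCommGroup F] [InnerProductSpace ℝ F]
    [CompleteSpace F] (f : F → ℝ) (x : F) : ‖gradient f x‖ = ‖fderiv ℝ f x‖ :=
  (InnerProductSpace.toDual ℝ F).symm.norm_map _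

noncomputable section

variable {E : Type*} [NormedAddCommGroup E]

def logBumpScale (ε R : ℝ) : ℝ := log (R ^ 2 + ε ^ 2) - log (ε ^ 2)

def logBump (c : E) (ε R : ℝ) (x : E) : ℝ :=
  smoothTransition ((log (R ^ 2 + ε ^ 2) - log (‖x - c‖ ^ 2 + ε ^ 2)) / logBumpScale ε R)

variable {c x : E} {ε R C : ℝ}

lemma logBumpScale_nonneg (hε : ε ≠ 0) : 0 ≤ logBumpScale ε R :=
  sub_nonneg.mpr (log_le_log (by positivity) (le_add_of_nonneg_left (sq_nonneg R)))

lemma logBumpScale_pos (hε : ε ≠ 0) (hR : R ≠ 0) : 0 < logBumpScale ε R :=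
  sub_pos.mpr (log_lt_log (by positivity) (lt_add_of_pos_left _ (by positivity)))

lemma contDiff_logBump [InnerProductSpace ℝ E] (c : E) (hε : ε ≠ 0) (R : ℝ) :
    ContDiff ℝ ∞ (logBump c ε R) :=
  smoothTransition.contDiff.comp <| (contDiff_const.sub <|
    ((contDiff_id.sub contDiff_const).norm_sq ℝ |>.add contDiff_const).log
      fun _ => by positivity).div_const _

lemma logBump_mem_Icc (c : E) (ε R : ℝ) (x : E) : logBump c ε R x ∈ Icc 0 1 :=
  ⟨smoothTransition.nonneg _, smoothTransition.le_one _⟩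

lemma logBump_self (c : E) (hε : ε ≠ 0) (hR : R ≠ 0) : logBump c ε R c = 1 := by
  rw [logBump, sub_self, norm_zero, zero_pow two_ne_zero, zero_add, ← logBumpScale,
    div_self (logBumpScale_pos hε hR).ne', smoothTransition.one]

lemma logBump_eq_zero (hε : ε ≠ 0) (hR : 0 ≤ R) (hx : R ≤ ‖x - c‖) : logBump c ε R x = 0 :=
  smoothTransition.zero_of_nonpos <| div_nonpos_of_nonpos_of_nonneg
    (sub_nonpos.mpr (log_le_log (by positivity) (by gcongr))) (logBumpScale_nonneg hε)

lemma tsupport_logBump_subset (c : E) (hε : ε ≠ 0) (hR : 0 ≤ R) :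
    tsupport (logBump c ε R) ⊆ closedBall c R := by
  refine closure_minimal (fun x hx => ?_) isClosed_closedBall
  rw [mem_closedBall, dist_eq_norm]
  by_contra h
  exact hx (logBump_eq_zero hε hR (le_of_not_ge h))

section InnerProductSpace

variable [InnerProductSpace ℝ E]

lemma norm_fderiv_logBump_le (hε : ε ≠ 0) (hC : ∀ t, |deriv smoothTransition t| ≤ C) (x : E) :
    ‖fderiv ℝ (logBump c ε R) x‖ ≤
      2 * C / logBumpScale ε R * (‖x - c‖ / (‖x - c‖ ^ 2 + ε ^ 2)) := by
  have hq : 0 < ‖x - c‖ ^ 2 + ε ^ 2 := by positivity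
  have hL : 0 ≤ logBumpScale ε R := logBumpScale_nonneg hε
  have hq' := (((hasFDerivAt_id x).sub_const c).norm_sq).add_const (ε ^ 2)
  have hu := ((hq'.log hq.ne').const_sub (log (R ^ 2 + ε ^ 2))).mul_const (logBumpScale ε R)⁻¹
  have hρ : HasFDerivAt (logBump c ε R) _ x :=
    (smoothTransition.contDiff (n := 1).differentiable one_ne_zero _).hasDerivAt
      |>.comp_hasFDerivAt x hu
  rw [hρ.fderiv]
  simp only [id, ContinuousLinearMap.comp_id, norm_smul, norm_neg, RCLike.norm_nsmul ℝ,
    innerSL_apply_norm, norm_inv, Real.norm_eq_abs, abs_of_nonneg hL, abs_of_pos hq, nsmul_eq_mul,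
    Nat.cast_ofNat]
  calc _ ≤ C * ((logBumpScale ε R)⁻¹ * ((‖x - c‖ ^ 2 + ε ^ 2)⁻¹ * (2 * ‖x - c‖))) :=
        mul_le_mul_of_nonneg_right (hC _) (by positivity)
    _ = _ := by ring

lemma norm_gradient_logBump_sq_le [CompleteSpace E] (hε : ε ≠ 0)
    (hC : ∀ t, |deriv smoothTransition t| ≤ C) (x : E) :
    ‖gradient (logBump c ε R) x‖ ^ 2 ≤ (2 * C / logBumpScale ε R) ^ 2 / (‖x - c‖ ^ 2 + ε ^ 2) := by
  have hq : 0 < ‖x - c‖ ^ 2 + ε ^ 2 := by positivity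
  rw [norm_gradient_eq_norm_fderiv]
  calc ‖fderiv ℝ (logBump c ε R) x‖ ^ 2
      ≤ (2 * C / logBumpScale ε R * (‖x - c‖ / (‖x - c‖ ^ 2 + ε ^ 2))) ^ 2 :=
        pow_le_pow_left₀ (norm_nonneg _) (norm_fderiv_logBump_le hε hC x) 2
    _ = (2 * C / logBumpScale ε R) ^ 2 * (‖x - c‖ ^ 2 / (‖x - c‖ ^ 2 + ε ^ 2)) /
          (‖x - c‖ ^ 2 + ε ^ 2) := by
        field_simp
    _ ≤ (2 * C / logBumpScale ε R) ^ 2 * 1 / (‖x - c‖ ^ 2 + ε ^ 2) := by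
        gcongr
        exact div_le_one_of_le₀ (by nlinarith) hq.le
    _ = _ := by rw [mul_one]

end InnerProductSpace

lemma integral_fun_norm_sub_fin_two (F : ℝ → ℝ) (c : EuclideanSpace ℝ (Fin 2)) :
    ∫ x, F ‖x - c‖ = 2 * π * ∫ r in Ioi 0, r * F r := by
  rw [integral_sub_right_eq_self (fun x => F ‖x‖) c, integral_fun_norm_addHaar volume F,
    finrank_euclideanSpace_fin, measureReal_def, EuclideanSpace.volume_ball_fin_two]
  simp [pi_pos.le, mul_assoc]

lemma setIntegral_closedBall_fun_norm_sub_fin_two (g : ℝ → ℝ) (c : EuclideanSpace ℝ (Fin 2))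
    (hR : 0 ≤ R) : ∫ x in closedBall c R, g ‖x - c‖ = 2 * π * ∫ r in 0..R, r * g r := by
  have hball : (closedBall c R).indicator (fun x => g ‖x - c‖) =
      fun x => (Iic R).indicator g ‖x - c‖ := by
    ext x
    simp only [indicator, mem_Iic, mem_closedBall, dist_eq_norm]
  have hmul : (fun r => r * (Iic R).indicator g r) = (Iic R).indicator fun r => r * g r :=
    funext fun r => (indicator_mul_right _ (fun r => r) _).symm
  rw [← integral_indicator measurableSet_closedBall, hball, integral_fun_norm_sub_fin_two, hmul,
    setIntegral_indicator measurableSet_Iic, Ioi_inter_Iic, intervalIntegral.integral_of_le hR]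

lemma integral_id_div_sq_add_sq (hε : ε ≠ 0) (R : ℝ) :
    ∫ r in 0..R, r / (r ^ 2 + ε ^ 2) = (log (R ^ 2 + ε ^ 2) - log (ε ^ 2)) / 2 := by
  have hq : ∀ r : ℝ, r ^ 2 + ε ^ 2 ≠ 0 := fun r => by positivity
  have hderiv : ∀ r ∈ uIcc 0 R,
      HasDerivAt (fun r => log (r ^ 2 + ε ^ 2) / 2) (r / (r ^ 2 + ε ^ 2)) r := fun r _ => by
    refine (HasDerivAt.div_const (((hasDerivAt_pow 2 r).add_const (ε ^ 2)).log (hq r)) 2)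
      |>.congr_deriv ?_
    field_simp
    ring
  rw [intervalIntegral.integral_eq_sub_of_hasDerivAt hderiv
    ((continuous_id.div (by fun_prop) hq).intervalIntegrable _ _)]
  ring_nf

lemma integral_norm_gradient_logBump_sq_le (c : EuclideanSpace ℝ (Fin 2)) (hε : ε ≠ 0)
    (hR : 0 < R) (hC : ∀ t, |deriv smoothTransition t| ≤ C) :
    ∫ x, ‖gradient (logBump c ε R) x‖ ^ 2 ≤ 4 * π * C ^ 2 / logBumpScale ε R := by
  set L := logBumpScale ε R
  have hL : 0 < L := logBumpScale_pos hε hR.ne'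
  have hzero : ∀ x ∉ closedBall c R, ‖gradient (logBump c ε R) x‖ ^ 2 = 0 := fun x hx => by
    rw [norm_gradient_eq_norm_fderiv,
      fderiv_of_notMem_tsupport ℝ fun h => hx (tsupport_logBump_subset c hε hR.le h),
      norm_zero, zero_pow two_ne_zero]
  have hint : IntegrableOn (fun x => (2 * C / L) ^ 2 / (‖x - c‖ ^ 2 + ε ^ 2)) (closedBall c R) :=
    (continuous_const.div (by fun_prop) fun x => by positivity).continuousOn.integrableOn_compact
      (isCompact_closedBall c R)
  rw [← setIntegral_eq_integral_of_forall_compl_eq_zero hzero]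
  calc ∫ x in closedBall c R, ‖gradient (logBump c ε R) x‖ ^ 2
      ≤ ∫ x in closedBall c R, (2 * C / L) ^ 2 / (‖x - c‖ ^ 2 + ε ^ 2) :=
        integral_mono_of_nonneg (.of_forall fun _ => by positivity) hint
          (.of_forall fun x => norm_gradient_logBump_sq_le hε hC x)
    _ = 2 * π * ((2 * C / L) ^ 2 * ∫ r in 0..R, r / (r ^ 2 + ε ^ 2)) := by
        rw [setIntegral_closedBall_fun_norm_sub_fin_two (fun r => (2 * C / L) ^ 2 / (r ^ 2 + ε ^ 2))
          c hR.le, ← intervalIntegral.integral_const_mul ((2 * C / L) ^ 2)]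
        congr 1
        exact intervalIntegral.integral_congr fun r _ => by ring
    _ = 4 * π * C ^ 2 / L := by
        rw [show ∫ r in 0..R, r / (r ^ 2 + ε ^ 2) = L / 2 from integral_id_div_sq_add_sq hε R]
        field_simp
        ring

lemma exists_lt_logBumpScale (hR : 0 < R) (M : ℝ) : ∃ ε > 0, M < logBumpScale ε R := by
  refine ⟨R * exp (-(M / 2)), by positivity, ?_⟩
  have hsq : (R * exp (-(M / 2))) ^ 2 = R ^ 2 * exp (-M) := by
    rw [mul_pow, ← exp_nat_mul]
    ring_nf
  have hlt : log (R ^ 2) < log (R ^ 2 + R ^ 2 * exp (-M)) :=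
    log_lt_log (by positivity) (lt_add_of_pos_right _ (by positivity))
  rw [logBumpScale, hsq, log_mul (by positivity) (exp_pos _).ne', log_exp]
  linarith

lemma exists_bump_energy_lt (c : EuclideanSpace ℝ (Fin 2)) {δ : ℝ} (hR : 0 < R) (hδ : 0 < δ) :
    ∃ ρ : EuclideanSpace ℝ (Fin 2) → ℝ, ContDiff ℝ ∞ ρ ∧ (∀ x, ρ x ∈ Icc 0 1) ∧
      tsupport ρ ⊆ closedBall c R ∧ ρ c = 1 ∧ ∫ x, ‖gradient ρ x‖ ^ 2 < δ := by
  obtain ⟨C, hC⟩ := smoothTransition.exists_abs_deriv_le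
  obtain ⟨ε, hε, hL⟩ := exists_lt_logBumpScale hR (4 * π * C ^ 2 / δ)
  refine ⟨logBump c ε R, contDiff_logBump c hε.ne' R, logBump_mem_Icc c ε R,
    tsupport_logBump_subset c hε.ne' hR.le, logBump_self c hε.ne' hR.ne', ?_⟩
  calc _ ≤ 4 * π * C ^ 2 / logBumpScale ε R := integral_norm_gradient_logBump_sq_le c hε.ne' hR hC
    _ < δ := by
      rw [div_lt_iff₀ (logBumpScale_pos hε.ne' hR.ne')]
      rw [div_lt_iff₀ hδ] at hL
      linarith

lemma exists_disjoint_closedBalls_subset_ball {F : Type*} [NormedAddCommGroup F]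
    [NormedSpace ℝ F] [Nontrivial F] (N : ℕ) {r : ℝ} (hr : 0 < r) :
    ∃ b > 0, ∃ c : Fin N → F, (∀ k, closedBall (c k) b ⊆ ball 0 r) ∧
      Pairwise fun k h => Disjoint (closedBall (c k) b) (closedBall (c h) b) := by
  obtain ⟨v, hv⟩ := exists_norm_eq F zero_le_one
  set b := r / (3 * N + 1)
  have hb : 0 < b := by positivity
  have hdist : ∀ k h : Fin N, dist ((3 * k * b) • v) ((3 * h * b) • v) = 3 * b * |(k - h : ℝ)| := by
    intro k h
    rw [dist_eq_norm, ← sub_smul, norm_smul, hv, mul_one, Real.norm_eq_abs,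
      show 3 * (k : ℝ) * b - 3 * h * b = 3 * b * (k - h) by ring, abs_mul,
      abs_of_pos (by positivity)]
  refine ⟨b, hb, fun k => (3 * k * b) • v, fun k => closedBall_subset_ball' ?_, fun k h hkh => ?_⟩
  · have hk : (k : ℝ) + 1 ≤ N := by exact_mod_cast k.isLt
    rw [dist_zero_right, norm_smul, hv, mul_one, Real.norm_eq_abs, abs_of_nonneg (by positivity)]
    have : b * (3 * N + 1) = r := div_mul_cancel₀ r (by positivity)
    nlinarith
  · have hkh' : (1 : ℝ) ≤ |(k - h : ℝ)| := by
      have : (k : ℤ) ≠ h := fun e => hkh (Fin.ext (by exact_mod_cast e))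
      exact_mod_cast Int.one_le_abs (sub_ne_zero.mpr this)
    refine closedBall_disjoint_closedBall ?_
    rw [hdist]
    nlinarith

end

theorem exists_disjoint_bumps_small_energy_general
    (r₀ : ℝ) (hr₀ : 0 < r₀) (N : ℕ) :
    ∃ ρ : Fin N → EuclideanSpace ℝ (Fin 2) → ℝ,
      (∀ k, ContDiff ℝ ∞ (ρ k)) ∧
      (∀ k x, 0 ≤ ρ k x ∧ ρ k x ≤ 1) ∧
      (∀ k, HasCompactSupport (ρ k) ∧
        tsupport (ρ k) ⊆ Metric.ball (0 : EuclideanSpace ℝ (Fin 2)) r₀) ∧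
      (∀ k h, k ≠ h → Disjoint (tsupport (ρ k)) (tsupport (ρ h))) ∧
      (∀ k, (∫ x, ‖gradient (ρ k) x‖ ^ 2) < 2 * Real.pi / N) ∧
      (∀ k, ∃ x, ρ k x = 1) := by
  obtain ⟨b, hb, c, hc_ball, hc_disjoint⟩ :=
    exists_disjoint_closedBalls_subset_ball (F := EuclideanSpace ℝ (Fin 2)) N hr₀
  have hδ (k : Fin N) : 0 < 2 * π / N := div_pos (by positivity) (Nat.cast_pos.mpr k.pos)
  choose ρ hρ_smooth hρ_mem hρ_supp hρ_one hρ_energy using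
    fun k => exists_bump_energy_lt (c k) hb (hδ k)
  refine ⟨ρ, hρ_smooth, hρ_mem, fun k => ⟨?_, (hρ_supp k).trans (hc_ball k)⟩,
    fun k h hkh => (hc_disjoint hkh).mono (hρ_supp k) (hρ_supp h), hρ_energy,
    fun k => ⟨c k, hρ_one k⟩⟩
  exact (isCompact_closedBall (c k) b).of_isClosed_subset (isClosed_tsupport _) (hρ_supp k)

/-- **Bump functions of small Dirichlet energy in the plane.**
For every `0 < r₀ < 1` and `N ≥ 1` there exist smooth functions `ρ₁, …, ρ_N : ℝ² → ℝ` with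
`0 ≤ ρₖ ≤ 1`, with compact supports contained in the open ball `B_{r₀}(0)`, pairwise
disjoint supports, Dirichlet energy `∫ |∇ρₖ|² < 2π/N`, each attaining the value `1`. -/
theorem exists_disjoint_bumps_small_energy
    (r₀ : ℝ) (hr₀ : 0 < r₀) (hr₀1 : r₀ < 1) (N : ℕ) (hN : 1 ≤ N) :
    ∃ ρ : Fin N → EuclideanSpace ℝ (Fin 2) → ℝ,
      (∀ k, ContDiff ℝ ∞ (ρ k)) ∧
      (∀ k x, 0 ≤ ρ k x ∧ ρ k x ≤ 1) ∧
      (∀ k, HasCompactSupport (ρ k) ∧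
        tsupport (ρ k) ⊆ Metric.ball (0 : EuclideanSpace ℝ (Fin 2)) r₀) ∧
      (∀ k h, k ≠ h → Disjoint (tsupport (ρ k)) (tsupport (ρ h))) ∧
      (∀ k, (∫ x, ‖gradient (ρ k) x‖ ^ 2) < 2 * Real.pi / N) ∧
      (∀ k, ∃ x, ρ k x = 1) :=
  exists_disjoint_bumps_small_energy_general r₀ hr₀ N
end

section
/- There exists a unique t₀ > 0 satisfying cosh t₀ = t₀ · sinh t₀; moreover this t₀ satisfies 1/sinh t₀ > 0.6627. -/
open Real

private lemma exp_smallarg_upper : Real.exp 0.39934 < 1.490841 := by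
  have h := Real.exp_bound' (by norm_num : (0:ℝ) ≤ 0.39934) (by norm_num)
    (by norm_num : 0 < 8)
  rw [show (8:ℕ) = 7 + 1 from rfl] at h
  simp only [Finset.sum_range_succ, Finset.sum_range_zero] at h
  norm_num [Nat.factorial] at h
  linarith

private lemma exp_sq_upper :
    Real.exp 1.19967 * Real.exp 1.19967 < 219967 / 19967 := by
  have h : Real.exp 1.19967 * Real.exp 1.19967 = Real.exp 1 * Real.exp 1 * Real.exp 0.39934 := by
    rw [← Real.exp_add, ← Real.exp_add, ← Real.exp_add]; norm_num
  rw [h]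
  have h1 := Real.exp_one_lt_d9
  have h2 := exp_smallarg_upper
  have hp : (0:ℝ) < Real.exp 0.39934 := Real.exp_pos _
  nlinarith [Real.exp_pos 1]

/-- **The critical parameter `t₀` of the catenoid equation.**
There is a unique `t₀ > 0` with `cosh t₀ = t₀ sinh t₀`, and it satisfies
`1 / sinh t₀ > 0.6627`. -/
theorem exists_unique_catenoid_parameter :
    ∃ t₀ : ℝ, (0 < t₀ ∧ Real.cosh t₀ = t₀ * Real.sinh t₀) ∧
      (∀ t : ℝ, 0 < t → Real.cosh t = t * Real.sinh t → t = t₀) ∧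
      0.6627 < 1 / Real.sinh t₀ := by
  set f : ℝ → ℝ := fun t => Real.cosh t - t * Real.sinh t with hfdef
  have hderiv : ∀ t : ℝ, HasDerivAt f (-(t * Real.cosh t)) t := by
    intro t
    have h := (Real.hasDerivAt_cosh t).sub
      ((hasDerivAt_id t).mul (Real.hasDerivAt_sinh t))
    have he : Real.sinh t - (1 * Real.sinh t + id t * Real.cosh t)
        = -(t * Real.cosh t) := by simp only [id_eq, one_mul]; ring
    exact he ▸ h
  have hcont : Continuous f :=
    Real.continuous_cosh.sub (continuous_id.mul Real.continuous_sinh)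
  have hanti : StrictAntiOn f (Set.Ici 0) := by
    apply strictAntiOn_of_deriv_neg (convex_Ici 0) hcont.continuousOn
    intro x hx
    rw [interior_Ici] at hx
    rw [(hderiv x).deriv]
    nlinarith [Real.cosh_pos x, hx.out]
  -- f (1.19967) > 0
  have hb : 0 < f 1.19967 := by
    have hE := exp_sq_upper
    have hEpos : (0:ℝ) < Real.exp 1.19967 := Real.exp_pos _
    have hneg : Real.exp (-(1.19967:ℝ)) = 1 / Real.exp 1.19967 := by
      rw [Real.exp_neg]; exact inv_eq_one_div _
    have hu : Real.exp 1.19967 * (1 / Real.exp 1.19967) = 1 :=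
      mul_one_div_cancel (ne_of_gt hEpos)
    simp only [hfdef, Real.cosh_eq, Real.sinh_eq, hneg]
    nlinarith [mul_pos hEpos hEpos]
  -- f 2 < 0
  have h2 : f 2 < 0 := by
    have hF : (3:ℝ) < Real.exp 2 := by
      have := Real.add_one_lt_exp (by norm_num : (2:ℝ) ≠ 0)
      linarith
    have hFpos : (0:ℝ) < Real.exp 2 := Real.exp_pos _
    have hneg : Real.exp (-(2:ℝ)) = 1 / Real.exp 2 := by
      rw [Real.exp_neg]; exact inv_eq_one_div _
    have hu : Real.exp 2 * (1 / Real.exp 2) = 1 :=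
      mul_one_div_cancel (ne_of_gt hFpos)
    simp only [hfdef, Real.cosh_eq, Real.sinh_eq, hneg]
    nlinarith [mul_pos hFpos hFpos]
  -- IVT
  obtain ⟨t₀, ht₀mem, ht₀⟩ : ∃ t₀ ∈ Set.Icc (1.19967:ℝ) 2, f t₀ = 0 := by
    have him := intermediate_value_Icc' (by norm_num : (1.19967:ℝ) ≤ 2)
      hcont.continuousOn
    have h0 : (0:ℝ) ∈ Set.Icc (f 2) (f 1.19967) := ⟨h2.le, hb.le⟩
    obtain ⟨t₀, ht, h⟩ := him h0
    exact ⟨t₀, ht, h⟩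
  have htb : (1.19967:ℝ) < t₀ := by
    rcases lt_or_eq_of_le ht₀mem.1 with h | h
    · exact h
    · exfalso; rw [← h] at ht₀; linarith
  have ht₀pos : 0 < t₀ := by linarith
  have heq : Real.cosh t₀ = t₀ * Real.sinh t₀ := by
    have := sub_eq_zero.mp ht₀
    exact this
  refine ⟨t₀, ⟨ht₀pos, heq⟩, ?_, ?_⟩
  · intro t ht hteq
    have hft : f t = 0 := by simp [hfdef, hteq]
    exact hanti.injOn (Set.mem_Ici.mpr ht.le) (Set.mem_Ici.mpr ht₀pos.le)
      (by rw [hft, ht₀])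
  · have hs : 0 < Real.sinh t₀ := Real.sinh_pos_iff.mpr ht₀pos
    have hid : Real.sinh t₀ ^ 2 * (t₀ ^ 2 - 1) = 1 := by
      have h1 := Real.cosh_sq_sub_sinh_sq t₀
      rw [heq] at h1
      nlinarith
    have hsq : (1.19967:ℝ)^2 < t₀^2 := by nlinarith
    have hkey : Real.sinh t₀ ^ 2 * 0.4392081 < 1 := by
      nlinarith [mul_pos hs hs]
    rw [lt_div_iff₀ hs]
    nlinarith [mul_pos hs hs]
end

section
/- Let t₀ > 0 satisfy cosh t₀ = t₀ · sinh t₀, and let r, h > 0 with h · sinh t₀ < r. Then the equation r s = cosh(s h) has exactly two positive solutions: there exist s₁, s₂ with 0 < s₁ < s₂, r s₁ = cosh(s₁ h), r s₂ = cosh(s₂ h), and such that every s > 0 with r s = cosh(s h) equals s₁ or s₂. -/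
/-!
The function `f s = cosh (s h) - r s` is strictly convex, so it has at most two zeros. It equals
`1` at `s = 0`, is negative at `s = t₀ / h` because there `h cosh t₀ = t₀ · h sinh t₀ < t₀ r`,
and is positive for large `s` since `cosh` grows quadratically. The intermediate value theorem
gives one zero on each side of `t₀ / h`.
-/

open Real Set Filter

theorem StrictConvexOn.eq_or_eq_of_apply_eq {𝕜 β : Type*} [Field 𝕜] [LinearOrder 𝕜]
    [IsStrictOrderedRing 𝕜] [AddCommMonoid β] [LinearOrder β] [IsOrderedAddMonoid β]
    [Module 𝕜 β] [PosSMulStrictMono 𝕜 β] {s : Set 𝕜} {f : 𝕜 → β}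
    (hf : StrictConvexOn 𝕜 s f) {x y z : 𝕜} (hx : x ∈ s) (hy : y ∈ s) (hz : z ∈ s)
    (hxy : x < y) (hfxy : f x = f y) (hfz : f z = f y) : z = x ∨ z = y := by
  have mid_lt {a b c : 𝕜} (ha : a ∈ s) (hc : c ∈ s) (hab : a < b) (hbc : b < c) :
      f b < max (f a) (f c) :=
    hf.lt_on_openSegment ha hc (hab.trans hbc).ne <| by
      rw [openSegment_eq_Ioo (hab.trans hbc)]; exact ⟨hab, hbc⟩
  rcases lt_trichotomy z x with hzx | rfl | hxz
  · have := mid_lt hz hy hzx hxy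
    simp [hfxy, hfz] at this
  · exact .inl rfl
  rcases lt_trichotomy z y with hzy | rfl | hyz
  · have := mid_lt hx hy hxz hzy
    simp [hfxy, hfz] at this
  · exact .inr rfl
  · have := mid_lt hx hz hxy hyz
    simp [hfxy, hfz] at this

theorem Real.one_add_sq_div_two_le_cosh (x : ℝ) : 1 + x ^ 2 / 2 ≤ cosh x := by
  have := sum_le_hasSum (Finset.range 2) (fun n _ => by rw [pow_mul]; positivity) (hasSum_cosh x)
  simpa [Finset.sum_range_succ] using this

theorem eventually_mul_lt_cosh_mul (r : ℝ) {h : ℝ} (hh : h ≠ 0) :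
    ∀ᶠ s in atTop, r * s < cosh (s * h) := by
  filter_upwards [eventually_ge_atTop (2 * r / h ^ 2), eventually_ge_atTop 0] with s hs hs₀
  have hrs : 2 * r ≤ s * h ^ 2 := (div_le_iff₀ (by positivity)).1 hs
  calc r * s ≤ (s * h) ^ 2 / 2 := by nlinarith
    _ < 1 + (s * h) ^ 2 / 2 := lt_one_add _
    _ ≤ cosh (s * h) := one_add_sq_div_two_le_cosh _

theorem strictConvexOn_cosh_mul_sub_mul (r : ℝ) {h : ℝ} (hh : 0 < h) :
    StrictConvexOn ℝ univ (fun s => cosh (s * h) - r * s) := by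
  have hderiv (s : ℝ) :
      HasDerivAt (fun s => cosh (s * h) - r * s) (sinh (s * h) * h - r) s := by
    simpa using (hasDerivAt_mul_const h).cosh.fun_sub ((hasDerivAt_id' s).const_mul r)
  refine StrictMono.strictConvexOn_univ_of_deriv (by fun_prop) ?_
  rw [funext fun s => (hderiv s).deriv]
  intro a b hab
  have := sinh_strictMono (mul_lt_mul_of_pos_right hab hh)
  exact sub_lt_sub_right (mul_lt_mul_of_pos_right this hh) r

theorem exists_two_catenoid_solutions_general
    (t₀ : ℝ) (ht₀ : 0 < t₀) (ht₀eq : Real.cosh t₀ = t₀ * Real.sinh t₀)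
    (r h : ℝ) (hh : 0 < h) (hrh : h * Real.sinh t₀ < r) :
    ∃ s₁ s₂ : ℝ, 0 < s₁ ∧ s₁ < s₂ ∧
      r * s₁ = Real.cosh (s₁ * h) ∧ r * s₂ = Real.cosh (s₂ * h) ∧
      ∀ s : ℝ, 0 < s → r * s = Real.cosh (s * h) → s = s₁ ∨ s = s₂ := by
  set f : ℝ → ℝ := fun s => cosh (s * h) - r * s
  have hf_cont : Continuous f := by fun_prop
  have hf_zero {s : ℝ} : f s = 0 ↔ r * s = cosh (s * h) := sub_eq_zero.trans eq_comm
  have hm : 0 < t₀ / h := by positivity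
  have hfm : f (t₀ / h) < 0 := by
    have : h * cosh t₀ < r * t₀ := by rw [ht₀eq]; nlinarith [mul_lt_mul_of_pos_left hrh ht₀]
    simp only [f, div_mul_cancel₀ t₀ hh.ne', sub_neg]
    rwa [mul_div_assoc', lt_div_iff₀ hh, mul_comm]
  obtain ⟨M, hfM, hmM⟩ :=
    ((eventually_mul_lt_cosh_mul r hh.ne').and (eventually_gt_atTop (t₀ / h))).exists
  obtain ⟨s₁, ⟨hs₁, hs₁m⟩, hfs₁⟩ := intermediate_value_Ioo' hm.le hf_cont.continuousOn
    (show (0 : ℝ) ∈ Ioo (f (t₀ / h)) (f 0) by simpa [f] using hfm)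
  obtain ⟨s₂, ⟨hms₂, -⟩, hfs₂⟩ := intermediate_value_Ioo hmM.le hf_cont.continuousOn
    (show (0 : ℝ) ∈ Ioo (f (t₀ / h)) (f M) from ⟨hfm, sub_pos.2 hfM⟩)
  refine ⟨s₁, s₂, hs₁, hs₁m.trans hms₂, hf_zero.1 hfs₁, hf_zero.1 hfs₂, fun s _ hs => ?_⟩
  exact (strictConvexOn_cosh_mul_sub_mul r hh).eq_or_eq_of_apply_eq (mem_univ _) (mem_univ _)
    (mem_univ _) (hs₁m.trans hms₂) (hfs₁.trans hfs₂.symm) ((hf_zero.2 hs).trans hfs₂.symm)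

/-- **Existence of exactly two catenoidal slices.**
Let `t₀ > 0` satisfy `cosh t₀ = t₀ sinh t₀` and let `r, h > 0` with `h sinh t₀ < r`.
Then the equation `r s = cosh (s h)` has exactly two positive solutions `s₁ < s₂`
(the stable and the unstable catenoid). -/
theorem exists_two_catenoid_solutions
    (t₀ : ℝ) (ht₀ : 0 < t₀) (ht₀eq : Real.cosh t₀ = t₀ * Real.sinh t₀)
    (r h : ℝ) (hr : 0 < r) (hh : 0 < h) (hrh : h * Real.sinh t₀ < r) :
    ∃ s₁ s₂ : ℝ, 0 < s₁ ∧ s₁ < s₂ ∧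
      r * s₁ = Real.cosh (s₁ * h) ∧ r * s₂ = Real.cosh (s₂ * h) ∧
      ∀ s : ℝ, 0 < s → r * s = Real.cosh (s * h) → s = s₁ ∨ s = s₂ :=
  exists_two_catenoid_solutions_general t₀ ht₀ ht₀eq r h hh hrh
end

section
/- Let r, h > 0 and define A(s) = 4π ∫₀^h (r cosh(sz)/cosh(sh)) · √(1 + (r s sinh(sz)/cosh(sh))²) dz for s ≥ 0. Suppose s₂ > 0 satisfies r s₂ = cosh(s₂ h) and r s < cosh(s h) for all s > s₂. Then: (i) s₂ h > 1; (ii) A(s₂) > 2π r² tanh(1); and (iii) if moreover 2h < r · tanh(1), then A(s₂) > 4π r h = A(0), i.e. the unstable catenoid has strictly larger area than the cylinder. -/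
/-!
On the unstable catenoid `r s₂ = cosh (s₂ h)` the profile satisfies `ρ = cosh (s₂ z) / s₂` and
`ρ' = sinh (s₂ z)`, so the area integrand collapses to `cosh (s₂ z) ^ 2 / s₂` and
`A(s₂) = 2π h / s₂ + 2π r² tanh (s₂ h)`. Since `s ↦ cosh (s h) - r s` vanishes at `s₂` and is
positive to its right, its derivative there is nonnegative: `r ≤ h sinh (s₂ h)`. Multiplying by
`s₂` gives `cosh x ≤ x sinh x` for `x = s₂ h`, which forces `x > 1` because `sinh x < cosh x`.
Monotonicity of `tanh` then gives `A(s₂) > 2π r² tanh 1`, and `2h < r tanh 1` turns this into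
`A(s₂) > 4π r h`.
-/

open Real Set

theorem HasDerivWithinAt.nonneg_of_forall_le_right {φ : ℝ → ℝ} {φ' x : ℝ}
    (hφ : HasDerivWithinAt φ φ' (Ioi x) x) (hmin : ∀ y ∈ Ioi x, φ x ≤ φ y) : 0 ≤ φ' := by
  rw [hasDerivWithinAt_iff_tendsto_slope, sdiff_singleton_eq_self self_notMem_Ioi] at hφ
  refine ge_of_tendsto hφ (eventually_nhdsWithin_of_forall fun y hy => ?_)
  rw [slope_def_field]
  exact div_nonneg (sub_nonneg.2 (hmin y hy)) (sub_nonneg.2 hy.le)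

namespace Real

theorem tanh_strictMono : StrictMono tanh := fun a b hab =>
  lt_of_not_ge fun hba => hab.not_ge <| by
    simpa only [artanh_tanh] using artanh_le_artanh (neg_one_lt_tanh b) (tanh_lt_one a) hba

theorem one_lt_of_cosh_le_mul_sinh {x : ℝ} (hx : 0 < x) (h : cosh x ≤ x * sinh x) : 1 < x := by
  by_contra! hle
  have : x * sinh x ≤ sinh x := mul_le_of_le_one_left (sinh_pos_iff.2 hx).le hle
  linarith [sinh_lt_cosh x]

theorem integral_cosh_mul_sq {c : ℝ} (hc : c ≠ 0) (h : ℝ) :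
    ∫ z in (0 : ℝ)..h, cosh (c * z) ^ 2 = h / 2 + sinh (c * h) * cosh (c * h) / (2 * c) := by
  have hderiv : ∀ z ∈ uIcc (0 : ℝ) h,
      HasDerivAt (fun z => z / 2 + sinh (c * z) * cosh (c * z) / (2 * c)) (cosh (c * z) ^ 2) z := by
    intro z _
    have hlin : HasDerivAt (fun z => c * z) c z := by simpa using (hasDerivAt_id' z).const_mul c
    refine (((hasDerivAt_id' z).div_const 2).fun_add
      ((hlin.sinh.fun_mul hlin.cosh).div_const (2 * c))).congr_deriv ?_
    field_simp
    linear_combination -cosh_sq (c * z)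
  rw [intervalIntegral.integral_eq_sub_of_hasDerivAt hderiv
    (Continuous.intervalIntegrable (by fun_prop) _ _)]
  simp

end Real

section Catenoid

variable {r h s : ℝ}

theorem le_mul_sinh_of_larger_root (heq : r * s = cosh (s * h))
    (hlargest : ∀ t : ℝ, s < t → r * t < cosh (t * h)) : r ≤ h * sinh (s * h) := by
  have hφ : HasDerivAt (fun t => cosh (t * h) - r * t) (sinh (s * h) * h - r) s := by
    simpa only [mul_one] using
      (hasDerivAt_mul_const h).cosh.fun_sub ((hasDerivAt_id' s).const_mul r)
  have := hφ.hasDerivWithinAt.nonneg_of_forall_le_right fun t ht => by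
    simp only [heq, sub_self, sub_nonneg]
    exact (hlargest t ht).le
  linarith

theorem catenoid_integrand_eq (hs : 0 < s) (heq : r * s = cosh (s * h)) (z : ℝ) :
    r * cosh (s * z) / cosh (s * h) * √(1 + (r * s * sinh (s * z) / cosh (s * h)) ^ 2)
      = cosh (s * z) ^ 2 / s := by
  have hcosh := (cosh_pos (s * h)).ne'
  have hρ : r * cosh (s * z) / cosh (s * h) = cosh (s * z) / s := by
    rw [div_eq_div_iff hcosh hs.ne', ← heq]
    ring
  have hρ' : r * s * sinh (s * z) / cosh (s * h) = sinh (s * z) := by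
    rw [heq, mul_div_right_comm, div_self hcosh, one_mul]
  rw [hρ, hρ', ← cosh_sq', sqrt_sq (cosh_pos _).le]
  ring

theorem catenoid_area_eq (hs : 0 < s) (heq : r * s = cosh (s * h)) :
    4 * π * ∫ z in (0 : ℝ)..h,
        r * cosh (s * z) / cosh (s * h) * √(1 + (r * s * sinh (s * z) / cosh (s * h)) ^ 2)
      = 2 * π * h / s + 2 * π * r ^ 2 * tanh (s * h) := by
  simp_rw [catenoid_integrand_eq hs heq]
  rw [intervalIntegral.integral_div, integral_cosh_mul_sq hs.ne', tanh_eq_sinh_div_cosh]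
  set x := s * h
  have := cosh_pos x
  field_simp
  linear_combination (-4 * sinh x * (cosh x + r * s)) * heq

end Catenoid

/-- **The unstable catenoid has larger area than the cylinder.**
Let `r, h > 0` and let `A(s)` be the area of the catenoidal slice `C_s^{r,h}`. If `s₂ > 0`
satisfies `r s₂ = cosh (s₂ h)` and `r s < cosh (s h)` for all `s > s₂` (i.e. `s₂` is the
larger solution, corresponding to the unstable catenoid), then `s₂ h > 1`,
`A(s₂) > 2π r² tanh 1`, and if moreover `2h < r tanh 1` then `A(s₂) > 4π r h = A(0)`. -/
theorem unstable_catenoid_area_gt_cylinder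
    (r h : ℝ) (hr : 0 < r) (hh : 0 < h)
    (A : ℝ → ℝ)
    (hA : ∀ s : ℝ, A s = 4 * Real.pi * ∫ z in (0:ℝ)..h,
        (r * Real.cosh (s * z) / Real.cosh (s * h)) *
          Real.sqrt (1 + (r * s * Real.sinh (s * z) / Real.cosh (s * h)) ^ 2))
    (s₂ : ℝ) (hs₂ : 0 < s₂) (heq : r * s₂ = Real.cosh (s₂ * h))
    (hlargest : ∀ s : ℝ, s₂ < s → r * s < Real.cosh (s * h)) :
    1 < s₂ * h ∧
      2 * Real.pi * r ^ 2 * Real.tanh 1 < A s₂ ∧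
      (2 * h < r * Real.tanh 1 → 4 * Real.pi * r * h < A s₂) := by
  have hslope := le_mul_sinh_of_larger_root heq hlargest
  have hx : 1 < s₂ * h := one_lt_of_cosh_le_mul_sinh (by positivity) <| by
    rw [← heq]
    linarith [mul_le_mul_of_nonneg_right hslope hs₂.le]
  have hA₂ : A s₂ = 2 * π * h / s₂ + 2 * π * r ^ 2 * tanh (s₂ * h) := by
    rw [hA, catenoid_area_eq hs₂ heq]
  have hcatenoid : 2 * π * r ^ 2 * tanh 1 < A s₂ := by
    have := mul_lt_mul_of_pos_left (tanh_strictMono hx) (by positivity : 0 < 2 * π * r ^ 2)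
    rw [hA₂]
    linarith [(by positivity : 0 < 2 * π * h / s₂)]
  refine ⟨hx, hcatenoid, fun hsmall => ?_⟩
  calc 4 * π * r * h = 2 * π * r * (2 * h) := by ring
    _ < 2 * π * r * (r * tanh 1) := by gcongr
    _ = 2 * π * r ^ 2 * tanh 1 := by ring
    _ < A s₂ := hcatenoid
end

section
/- Let r, h > 0 with 2h < r · tanh(1), and define A(s) = 4π ∫₀^h (r cosh(sz)/cosh(sh)) · √(1 + (r s sinh(sz)/cosh(sh))²) dz for s ≥ 0. Suppose s₂ > 0 satisfies r s₂ = cosh(s₂ h) and s ≤ s₂ for every s > 0 with r s = cosh(s h). Then A(s) ≤ A(s₂) for every s ≥ 0; that is, the unstable catenoid has largest area among all surfaces in the family {C_s^{r,h}}_{s ≥ 0}. -/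
/-!
For `s ≠ 0` the area integral is elementary: with `P(s) = ρ'(h) = r s tanh (s h)` and `F` the
primitive of `√(1 + x²)` vanishing at `0`, `A(s) = 4π F(P(s)) / s²`. Writing `T = arsinh P(s)`,
`A'(s)` has the sign of `sinh (2T) / 2T - sinh (2sh) / 2sh`, and since `x ↦ sinh x / x`
increases on `(0, ∞)`, this is the sign of `T - s h`, i.e. of `r s - cosh (s h)`. That function
of `s` is concave, so `A` decreases on the stable side `r s < cosh (s h)` near `0`, increases
while `r s ≥ cosh (s h)` up to `s₂`, and decreases beyond `s₂`. Hence `A ≤ max (A 0) (A s₂)`,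
and `A 0 = 4π r h ≤ A s₂` is an explicit inequality, which holds because `2h < r tanh 1`
forces `r ≥ 2h` and `s₂ h ≥ 1`.
-/

open Real Set

namespace Real

theorem convexOn_cosh : ConvexOn ℝ univ cosh :=
  Monotone.convexOn_univ_of_deriv differentiable_cosh
    (by rw [Real.deriv_cosh]; exact sinh_strictMono.monotone)

theorem convexOn_sinh_Ici : ConvexOn ℝ (Ici 0) sinh :=
  MonotoneOn.convexOn_of_deriv (convex_Ici 0) continuous_sinh.continuousOn
    differentiable_sinh.differentiableOn
    (by rw [Real.deriv_sinh, interior_Ici]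
        exact cosh_strictMonoOn.monotoneOn.mono Ioi_subset_Ici_self)

theorem sinh_div_self_le {x y : ℝ} (hx : 0 < x) (hxy : x ≤ y) : sinh x / x ≤ sinh y / y := by
  simpa using convexOn_sinh_Ici.secant_mono (a := 0) self_mem_Ici hx.le (hx.trans_le hxy).le
    hx.ne' (hx.trans_le hxy).ne' hxy

theorem sinh_one_lt_two : sinh 1 < 2 := by
  rw [sinh_eq]
  linarith [exp_one_lt_three, exp_pos (-1)]

theorem concaveOn_mul_sub_cosh_mul (r h : ℝ) :
    ConcaveOn ℝ univ (fun u => r * u - cosh (u * h)) :=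
  ((LinearMap.mul ℝ ℝ r).concaveOn convex_univ).sub
    (convexOn_cosh.comp_linearMap (LinearMap.id.smulRight h))

theorem cosh_mul_le_of_mem_Icc {r h s t u : ℝ} (hs : cosh (s * h) ≤ r * s)
    (ht : cosh (t * h) ≤ r * t) (hu : u ∈ Icc s t) : cosh (u * h) ≤ r * u := by
  have := (concaveOn_mul_sub_cosh_mul r h).min_le_of_mem_Icc (mem_univ s) (mem_univ t) hu
  simp only [min_le_iff] at this
  rcases this with h | h <;> linarith

theorem mul_lt_cosh_mul_of_lt {r h s t u : ℝ} (hs : r * s < cosh (s * h))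
    (ht : cosh (t * h) ≤ r * t) (hus : u < s) (hst : s ≤ t) : r * u < cosh (u * h) := by
  have hst' : s < t := hst.lt_of_ne (by rintro rfl; linarith)
  have hseg : s ∈ openSegment ℝ t u := by
    rw [openSegment_symm, openSegment_eq_Ioo (hus.trans hst')]
    exact ⟨hus, hst'⟩
  have := (concaveOn_mul_sub_cosh_mul r h).lt_right_of_left_lt (mem_univ t) (mem_univ u) hseg
    (by linarith)
  linarith

theorem exists_gt_mul_lt_cosh_mul {h : ℝ} (hh : 0 < h) (r u : ℝ) :
    ∃ M, u < M ∧ r * M < cosh (M * h) := by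
  set M := max u 0 + 4 * |r| / h ^ 2 + 1
  have hMpos : 0 < M := by positivity
  have hfrac : 0 ≤ 4 * |r| / h ^ 2 := by positivity
  refine ⟨M, by linarith [le_max_left u 0], ?_⟩
  have hexp := quadratic_le_exp_of_nonneg (mul_pos hMpos hh).le
  have hr : 4 * |r| < M * h ^ 2 := by
    rw [← div_lt_iff₀ (by positivity)]; linarith [le_max_right u 0]
  rw [cosh_eq]
  nlinarith [exp_pos (-(M * h)), le_abs_self r, mul_lt_mul_of_pos_left hr hMpos]

theorem mul_lt_cosh_mul_of_lt_of_forall_le {r h s₂ u : ℝ} (hh : 0 < h) (hs₂ : 0 ≤ s₂)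
    (hlargest : ∀ s, 0 < s → r * s = cosh (s * h) → s ≤ s₂) (hu : s₂ < u) :
    r * u < cosh (u * h) := by
  by_contra! hge
  obtain ⟨M, huM, hM⟩ := exists_gt_mul_lt_cosh_mul hh r u
  obtain ⟨v, hv, hv0⟩ := intermediate_value_Icc' huM.le
    (f := fun x => r * x - cosh (x * h)) (by fun_prop)
    (show (0 : ℝ) ∈ Icc (r * M - cosh (M * h)) (r * u - cosh (u * h)) from
      ⟨by linarith, by linarith⟩)
  linarith [hv.1, hlargest v (by linarith [hv.1]) (by linarith [hv0])]

theorem one_le_mul_of_forall_le {r h s₂ : ℝ} (hh : 0 < h) (hs₂ : 0 ≤ s₂)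
    (hlargest : ∀ s, 0 < s → r * s = cosh (s * h) → s ≤ s₂) (hcosh : h * cosh 1 < r) :
    1 ≤ s₂ * h := by
  by_contra! hlt
  have := mul_lt_cosh_mul_of_lt_of_forall_le hh hs₂ hlargest (u := 1 / h)
    (by rwa [lt_div_iff₀ hh])
  rw [one_div_mul_cancel hh.ne', mul_one_div, div_lt_iff₀ hh] at this
  linarith

theorem mul_cosh_one_lt_of_two_mul_lt {r h : ℝ} (hr : 0 < r) (hrh : 2 * h < r * tanh 1) :
    h * cosh 1 < r := by
  rw [tanh_eq_sinh_div_cosh, mul_div_assoc', lt_div_iff₀ (cosh_pos 1)] at hrh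
  nlinarith [sinh_one_lt_two]

end Real

namespace Catenoid

noncomputable def primitiveSqrtOneAddSq (x : ℝ) : ℝ := (x * √(1 + x ^ 2) + arsinh x) / 2

theorem hasDerivAt_primitiveSqrtOneAddSq (x : ℝ) :
    HasDerivAt primitiveSqrtOneAddSq (√(1 + x ^ 2)) x := by
  have hpos : 0 < √(1 + x ^ 2) := sqrt_pos.mpr (by positivity)
  have hsq : √(1 + x ^ 2) ^ 2 = 1 + x ^ 2 := sq_sqrt (by positivity)
  have hroot : HasDerivAt (fun y => √(1 + y ^ 2)) (2 * x / (2 * √(1 + x ^ 2))) x := by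
    simpa using ((hasDerivAt_pow 2 x).const_add 1).sqrt (by positivity)
  refine ((((hasDerivAt_id' x).mul hroot).add (hasDerivAt_arsinh x)).div_const 2).congr_deriv ?_
  field_simp
  rw [hsq]
  ring

/-- `ρ'(h)` for the profile `ρ(z) = r cosh (s z) / cosh (s h)`. -/
noncomputable def edgeSlope (r h s : ℝ) : ℝ := r * s * sinh (s * h) / cosh (s * h)

noncomputable def area (r h s : ℝ) : ℝ :=
  4 * π * ∫ z in (0 : ℝ)..h,
    (r * cosh (s * z) / cosh (s * h)) * √(1 + (r * s * sinh (s * z) / cosh (s * h)) ^ 2)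

theorem area_zero (r h : ℝ) : area r h 0 = 4 * π * (r * h) := by
  simp [area, mul_comm]

theorem area_eq_of_ne_zero {r h s : ℝ} (hs : s ≠ 0) :
    area r h s = 4 * π * primitiveSqrtOneAddSq (edgeSlope r h s) / s ^ 2 := by
  set C := cosh (s * h)
  have hslope : ∀ z, HasDerivAt (fun z => r * s * sinh (s * z) / C)
      (s ^ 2 * (r * cosh (s * z) / C)) z := by
    intro z
    refine ((((hasDerivAt_id' z).const_mul s).sinh.const_mul (r * s)).div_const C).congr_deriv ?_
    ring
  have hprim : ∀ z, HasDerivAt (fun z => primitiveSqrtOneAddSq (r * s * sinh (s * z) / C) / s ^ 2)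
      ((r * cosh (s * z) / C) * √(1 + (r * s * sinh (s * z) / C) ^ 2)) z := by
    intro z
    refine (((hasDerivAt_primitiveSqrtOneAddSq _).comp z (hslope z)).div_const _).congr_deriv ?_
    field_simp
  have hcont : Continuous fun z =>
      (r * cosh (s * z) / C) * √(1 + (r * s * sinh (s * z) / C) ^ 2) := by
    fun_prop
  rw [area, intervalIntegral.integral_eq_sub_of_hasDerivAt (fun z _ => hprim z)
    (hcont.intervalIntegrable 0 h)]
  simp only [edgeSlope, primitiveSqrtOneAddSq, mul_zero, sinh_zero, zero_div, ne_eq,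
    OfNat.ofNat_ne_zero, not_false_eq_true, zero_pow, add_zero, sqrt_one, mul_one, arsinh_zero,
    sub_zero]
  ring

theorem continuous_area (r h : ℝ) : Continuous (area r h) := by
  unfold area
  have hint : Continuous (Function.uncurry fun s z : ℝ =>
      (r * cosh (s * z) / cosh (s * h)) * √(1 + (r * s * sinh (s * z) / cosh (s * h)) ^ 2)) := by
    fun_prop (disch := exact fun _ => (cosh_pos _).ne')
  exact continuous_const.mul
    (intervalIntegral.continuous_parametric_intervalIntegral_of_continuous' hint 0 h)

theorem hasDerivAt_edgeSlope (r h s : ℝ) :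
    HasDerivAt (edgeSlope r h)
      (r * sinh (s * h) / cosh (s * h) + r * h * s / cosh (s * h) ^ 2) s := by
  have hC := (cosh_pos (s * h)).ne'
  have hsh : HasDerivAt (fun u => u * h) h s :=
    ((hasDerivAt_id' s).mul_const h).congr_deriv (one_mul h)
  refine ((((hasDerivAt_id' s).const_mul r).mul hsh.sinh).div hsh.cosh hC).congr_deriv ?_
  simp only [Pi.mul_apply]
  field_simp
  linear_combination (r * h * s) * cosh_sq_sub_sinh_sq (s * h)

noncomputable def areaDeriv (r h s : ℝ) : ℝ :=
  4 * π / s ^ 3 *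
    (r * h * s ^ 2 / cosh (s * h) ^ 2 * √(1 + edgeSlope r h s ^ 2) - arsinh (edgeSlope r h s))

theorem hasDerivAt_area {r h s : ℝ} (hs : s ≠ 0) :
    HasDerivAt (area r h) (areaDeriv r h s) s := by
  have hclosed := (((hasDerivAt_primitiveSqrtOneAddSq _).comp s
    (hasDerivAt_edgeSlope r h s)).const_mul (4 * π)).div (hasDerivAt_pow 2 s) (pow_ne_zero 2 hs)
  refine (hclosed.congr_deriv ?_).congr_of_eventuallyEq
    ((eventually_ne_nhds hs).mono fun u hu => area_eq_of_ne_zero hu)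
  simp only [areaDeriv, primitiveSqrtOneAddSq, edgeSlope, Function.comp]
  field_simp
  ring

theorem edgeSlope_pos {r h s : ℝ} (hr : 0 < r) (hh : 0 < h) (hs : 0 < s) :
    0 < edgeSlope r h s := by
  have hS := sinh_pos_iff.mpr (mul_pos hs hh)
  unfold edgeSlope; positivity

theorem sinh_le_edgeSlope_iff {r h s : ℝ} (hh : 0 < h) (hs : 0 < s) :
    sinh (s * h) ≤ edgeSlope r h s ↔ cosh (s * h) ≤ r * s := by
  have hS := sinh_pos_iff.mpr (mul_pos hs hh)
  rw [edgeSlope, mul_div_right_comm, le_mul_iff_one_le_left hS, one_le_div (cosh_pos _)]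

theorem edgeSlope_le_sinh_iff {r h s : ℝ} (hh : 0 < h) (hs : 0 < s) :
    edgeSlope r h s ≤ sinh (s * h) ↔ r * s ≤ cosh (s * h) := by
  have hS := sinh_pos_iff.mpr (mul_pos hs hh)
  rw [edgeSlope, mul_div_right_comm, mul_le_iff_le_one_left hS, div_le_one (cosh_pos _)]

theorem areaDeriv_eq {r h s : ℝ} (hr : 0 < r) (hh : 0 < h) (hs : 0 < s) :
    areaDeriv r h s = 4 * π / s ^ 3 * arsinh (edgeSlope r h s) *
      (sinh (2 * arsinh (edgeSlope r h s)) / (2 * arsinh (edgeSlope r h s)) /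
        (sinh (2 * (s * h)) / (2 * (s * h))) - 1) := by
  have hT := arsinh_pos_iff.mpr (edgeSlope_pos hr hh hs)
  have hS := sinh_pos_iff.mpr (mul_pos hs hh)
  have hC := cosh_pos (s * h)
  have hcoef : r * h * s ^ 2 / cosh (s * h) ^ 2 =
      edgeSlope r h s * (s * h) / (sinh (s * h) * cosh (s * h)) := by
    unfold edgeSlope; field_simp
  rw [areaDeriv, hcoef, sinh_two_mul, sinh_two_mul, sinh_arsinh, cosh_arsinh]
  generalize arsinh (edgeSlope r h s) = T at hT ⊢
  field_simp

theorem areaDeriv_nonneg {r h s : ℝ} (hr : 0 < r) (hh : 0 < h) (hs : 0 < s)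
    (hcat : cosh (s * h) ≤ r * s) : 0 ≤ areaDeriv r h s := by
  have hsh := mul_pos hs hh
  have hT := arsinh_pos_iff.mpr (edgeSlope_pos hr hh hs)
  have hTge : s * h ≤ arsinh (edgeSlope r h s) := by
    rwa [← arsinh_sinh (s * h), arsinh_le_arsinh, sinh_le_edgeSlope_iff hh hs]
  have hσpos : 0 < sinh (2 * (s * h)) / (2 * (s * h)) :=
    div_pos (sinh_pos_iff.mpr (by positivity)) (by positivity)
  have hratio := (one_le_div hσpos).mpr (sinh_div_self_le (by positivity : 0 < 2 * (s * h))
    (by linarith : 2 * (s * h) ≤ 2 * arsinh (edgeSlope r h s)))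
  rw [areaDeriv_eq hr hh hs]
  have := pi_pos
  exact mul_nonneg (by positivity) (by linarith)

theorem areaDeriv_nonpos {r h s : ℝ} (hr : 0 < r) (hh : 0 < h) (hs : 0 < s)
    (hcat : r * s ≤ cosh (s * h)) : areaDeriv r h s ≤ 0 := by
  have hT := arsinh_pos_iff.mpr (edgeSlope_pos hr hh hs)
  have hTle : arsinh (edgeSlope r h s) ≤ s * h := by
    rwa [← arsinh_sinh (s * h), arsinh_le_arsinh, edgeSlope_le_sinh_iff hh hs]
  have hσpos : 0 < sinh (2 * (s * h)) / (2 * (s * h)) :=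
    div_pos (sinh_pos_iff.mpr (by positivity)) (by positivity)
  have hratio := (div_le_one hσpos).mpr (sinh_div_self_le
    (by positivity : 0 < 2 * arsinh (edgeSlope r h s)) (by linarith : _ ≤ 2 * (s * h)))
  rw [areaDeriv_eq hr hh hs]
  have := pi_pos
  exact mul_nonpos_of_nonneg_of_nonpos (by positivity) (by linarith)

theorem area_monotoneOn {r h : ℝ} (hr : 0 < r) (hh : 0 < h) {D : Set ℝ} (hD : Convex ℝ D)
    (hcat : ∀ u ∈ interior D, 0 < u ∧ cosh (u * h) ≤ r * u) : MonotoneOn (area r h) D :=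
  monotoneOn_of_hasDerivWithinAt_nonneg hD (continuous_area r h).continuousOn
    (fun u hu => (hasDerivAt_area (hcat u hu).1.ne').hasDerivWithinAt)
    (fun u hu => areaDeriv_nonneg hr hh (hcat u hu).1 (hcat u hu).2)

theorem area_antitoneOn {r h : ℝ} (hr : 0 < r) (hh : 0 < h) {D : Set ℝ} (hD : Convex ℝ D)
    (hcat : ∀ u ∈ interior D, 0 < u ∧ r * u ≤ cosh (u * h)) : AntitoneOn (area r h) D :=
  antitoneOn_of_hasDerivWithinAt_nonpos hD (continuous_area r h).continuousOn
    (fun u hu => (hasDerivAt_area (hcat u hu).1.ne').hasDerivWithinAt)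
    (fun u hu => areaDeriv_nonpos hr hh (hcat u hu).1 (hcat u hu).2)

theorem area_zero_le_of_mul_eq_cosh {r h s : ℝ} (hr : 0 < r) (hh : 0 < h) (h2r : 2 * h ≤ r)
    (hsh : 1 ≤ s * h) (hcat : r * s = cosh (s * h)) : area r h 0 ≤ area r h s := by
  have hs : 0 < s := pos_of_mul_pos_left (one_pos.trans_le hsh) hh.le
  have hS : 0 ≤ sinh (s * h) := sinh_nonneg_iff.mpr (by positivity)
  have hSsq : sinh (s * h) ^ 2 = (r * s) ^ 2 - 1 := by
    rw [hcat]; linarith [cosh_sq_sub_sinh_sq (s * h)]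
  have hrs : 2 ≤ r * s := by nlinarith
  have hsq : (2 * r * h * s - h) ^ 2 ≤ (sinh (s * h) * r) ^ 2 := by
    nlinarith [mul_nonneg (by nlinarith : 0 ≤ (r * s) ^ 2 - 4)
        (by nlinarith : 0 ≤ r ^ 2 - 4 * h ^ 2),
      mul_nonneg (mul_pos hr hh).le (sub_nonneg.2 hsh),
      mul_nonneg (sub_nonneg.2 h2r) (by positivity : 0 ≤ 3 * r + 10 * h)]
  have hkey : 2 * r * h * s ≤ sinh (s * h) * r + h := by nlinarith [mul_nonneg hS hr.le]
  have hP : edgeSlope r h s = sinh (s * h) := by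
    rw [edgeSlope, hcat]; field_simp
  have hF : primitiveSqrtOneAddSq (sinh (s * h)) = (sinh (s * h) * (r * s) + s * h) / 2 := by
    rw [primitiveSqrtOneAddSq, ← cosh_arsinh, arsinh_sinh, hcat]
  rw [area_zero, area_eq_of_ne_zero hs.ne', hP, hF, le_div_iff₀ (by positivity)]
  nlinarith [mul_le_mul_of_nonneg_left hkey (by positivity : 0 ≤ 2 * π * s)]

end Catenoid

open Catenoid

theorem unstable_catenoid_is_maximal_general
    (r h : ℝ) (hr : 0 < r) (hh : 0 < h) (hrh : 2 * h < r * Real.tanh 1)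
    (A : ℝ → ℝ)
    (hA : ∀ s : ℝ, A s = 4 * Real.pi * ∫ z in (0:ℝ)..h,
        (r * Real.cosh (s * z) / Real.cosh (s * h)) *
          Real.sqrt (1 + (r * s * Real.sinh (s * z) / Real.cosh (s * h)) ^ 2))
    (s₂ : ℝ) (heq : r * s₂ = Real.cosh (s₂ * h))
    (hlargest : ∀ s : ℝ, 0 < s → r * s = Real.cosh (s * h) → s ≤ s₂) :
    ∀ s : ℝ, 0 ≤ s → A s ≤ A s₂ := by
  obtain rfl : A = area r h := funext hA
  have hs₂ : 0 < s₂ := pos_of_mul_pos_right (heq ▸ cosh_pos _) hr.le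
  have h2r : 2 * h ≤ r := by nlinarith [tanh_lt_one 1]
  have hs₂h : 1 ≤ s₂ * h :=
    one_le_mul_of_forall_le hh hs₂.le hlargest (mul_cosh_one_lt_of_two_mul_lt hr hrh)
  intro s hs
  rcases le_or_gt s s₂ with hle | hlt
  · rcases le_or_gt (cosh (s * h)) (r * s) with hcat | hcat
    · refine area_monotoneOn hr hh (convex_Icc s s₂) (fun u hu => ?_)
        ⟨le_rfl, hle⟩ ⟨hle, le_rfl⟩ hle
      rw [interior_Icc] at hu
      exact ⟨hs.trans_lt hu.1, cosh_mul_le_of_mem_Icc hcat heq.ge (Ioo_subset_Icc_self hu)⟩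
    · calc area r h s ≤ area r h 0 := by
            refine area_antitoneOn hr hh (convex_Icc 0 s) (fun u hu => ?_)
              ⟨le_rfl, hs⟩ ⟨hs, le_rfl⟩ hs
            rw [interior_Icc] at hu
            exact ⟨hu.1, (mul_lt_cosh_mul_of_lt hcat heq.ge hu.2 hle).le⟩
        _ ≤ area r h s₂ := area_zero_le_of_mul_eq_cosh hr hh h2r hs₂h heq
  · refine area_antitoneOn hr hh (convex_Ici s₂) (fun u hu => ?_) self_mem_Ici hlt.le hlt.le
    rw [interior_Ici] at hu
    exact ⟨hs₂.trans hu, (mul_lt_cosh_mul_of_lt_of_forall_le hh hs₂.le hlargest hu).le⟩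

/-- **Maximality of the unstable catenoid.**
Let `r, h > 0` with `2h < r tanh 1`, `A(s)` the area of the catenoidal slice `C_s^{r,h}`,
and let `s₂ > 0` be the larger solution of `r s = cosh (s h)` (the unstable catenoid).
Then `A(s) ≤ A(s₂)` for all `s ≥ 0`: the unstable catenoid has largest area in the
family `{C_s^{r,h}}_{s ≥ 0}`. -/
theorem unstable_catenoid_is_maximal
    (r h : ℝ) (hr : 0 < r) (hh : 0 < h) (hrh : 2 * h < r * Real.tanh 1)
    (A : ℝ → ℝ)
    (hA : ∀ s : ℝ, A s = 4 * Real.pi * ∫ z in (0:ℝ)..h,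
        (r * Real.cosh (s * z) / Real.cosh (s * h)) *
          Real.sqrt (1 + (r * s * Real.sinh (s * z) / Real.cosh (s * h)) ^ 2))
    (s₂ : ℝ) (hs₂ : 0 < s₂) (heq : r * s₂ = Real.cosh (s₂ * h))
    (hlargest : ∀ s : ℝ, 0 < s → r * s = Real.cosh (s * h) → s ≤ s₂) :
    ∀ s : ℝ, 0 ≤ s → A s ≤ A s₂ :=
  unstable_catenoid_is_maximal_general r h hr hh hrh A hA s₂ heq hlargest
end

section
/- Let ρ₀ ≥ 0, σ₀ ≥ 0 and l > 0, and suppose that for every continuously differentiable function ξ : [0, l] → ℝ with ξ(0) = 0 one has (ρ₀/2) ∫₀^l ξ(t)² dt + σ₀ ξ(l)² ≤ (4/3) ∫₀^l ξ'(t)² dt. Then: (i) if σ₀ > 0, then l ≤ 4/(3σ₀); and (ii) if ρ₀ > 0, then l ≤ 2√2 π/√(3 ρ₀). -/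
/-!
Testing the inequality with `ξ t = t` gives `ρ₀ l³ / 6 + σ₀ l² ≤ 4 l / 3`. Both terms on the
left are nonnegative, so `σ₀ l ≤ 4 / 3` and `ρ₀ l² ≤ 8`; the latter is within the claimed bound
`3 ρ₀ l² ≤ 8 π²` because `π² ≥ 3`.
-/

open Real

theorem le_two_mul_sqrt_two_mul_pi_div_sqrt {ρ l : ℝ} (hρ : 0 < ρ)
    (h : ρ * l ^ 2 ≤ 8) : l ≤ 2 * √2 * π / √(3 * ρ) := by
  have hsq : (l * √(3 * ρ)) ^ 2 ≤ (2 * √2 * π) ^ 2 := by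
    rw [mul_pow, mul_pow, mul_pow, sq_sqrt (by positivity), sq_sqrt zero_le_two]
    nlinarith [pi_gt_three]
  rw [le_div_iff₀ (by positivity)]
  exact le_of_sq_le_sq hsq (by positivity)

theorem stability_inequality_at_id {ρ₀ σ₀ l : ℝ}
    (hineq : ∀ ξ : ℝ → ℝ, ContDiff ℝ 1 ξ → ξ 0 = 0 →
      ρ₀ / 2 * (∫ t in (0:ℝ)..l, ξ t ^ 2) + σ₀ * ξ l ^ 2 ≤
        4 / 3 * ∫ t in (0:ℝ)..l, (deriv ξ t) ^ 2) :
    ρ₀ * l ^ 3 / 6 + σ₀ * l ^ 2 ≤ 4 / 3 * l := by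
  have h := hineq id contDiff_id rfl
  simp only [id, deriv_id', one_pow, intervalIntegral.integral_const, integral_pow] at h
  norm_num at h
  linarith

/-- **Length bound from a one-dimensional stability-type inequality.**
Let `ρ₀, σ₀ ≥ 0` and `l > 0`, and suppose that every `C¹` function `ξ` with `ξ(0) = 0`
satisfies `(ρ₀/2) ∫₀^l ξ² + σ₀ ξ(l)² ≤ (4/3) ∫₀^l (ξ')²`. Then `l ≤ 4/(3σ₀)` if `σ₀ > 0`,
and `l ≤ 2√2 π/√(3ρ₀)` if `ρ₀ > 0`. -/
theorem length_bound_of_stability_inequality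
    (ρ₀ σ₀ l : ℝ) (hρ₀ : 0 ≤ ρ₀) (hσ₀ : 0 ≤ σ₀) (hl : 0 < l)
    (hineq : ∀ ξ : ℝ → ℝ, ContDiff ℝ 1 ξ → ξ 0 = 0 →
      ρ₀ / 2 * (∫ t in (0:ℝ)..l, ξ t ^ 2) + σ₀ * ξ l ^ 2 ≤
        4 / 3 * ∫ t in (0:ℝ)..l, (deriv ξ t) ^ 2) :
    (0 < σ₀ → l ≤ 4 / (3 * σ₀)) ∧
      (0 < ρ₀ → l ≤ 2 * Real.sqrt 2 * Real.pi / Real.sqrt (3 * ρ₀)) := by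
  have key := stability_inequality_at_id hineq
  have hρ₀l : 0 ≤ ρ₀ * l ^ 3 := by positivity
  have hσ₀l : 0 ≤ σ₀ * l ^ 2 := by positivity
  refine ⟨fun hσ => ?_, fun hρ => ?_⟩
  · rw [le_div_iff₀ (by positivity)]
    nlinarith
  · refine le_two_mul_sqrt_two_mul_pi_div_sqrt hρ ?_
    nlinarith
end
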